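/- arXiv:2509.21429 — 12 statements merged into one kernel-verified Lean document; each statement's English description precedes it below -/
import Mathlib

section
/- In any simple graph G on n vertices with n > k ≥ 1, there exist k+1 vertices whose degrees pairwise differ by less than k. -/
/-!
Sort the vertices by degree, `d₀ ≤ d₁ ≤ ⋯ ≤ d_{n-1}`. If the claim fails, every window of `k + 1`
consecutive vertices has spread at least `k`, so `d_{i+k} ≥ dᵢ + k` and hence `d_{i+qk} ≥ dᵢ + qk`.
Write `n = s + qk` with `1 ≤ s ≤ k`, and let `A` be the `s` vertices of lowest degree. The vertex
`qk` places above a vertex of `A` lies outside `A` and has degree at least `n - s` more; since it has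
only `n - s - 1` possible neighbours outside `A` besides itself, it has at least one more neighbour
in `A` than its partner in `A` has degree. Summing over `A` and double counting the edges between
`A` and its image gives a contradiction.
-/

open Finset

namespace SimpleGraph

variable {V : Type*} [Fintype V] [DecidableEq V] (G : SimpleGraph V) [DecidableRel G.Adj]

theorem degree_add_card_add_one_le {A : Finset V} {b : V} (hb : b ∉ A) :
    G.degree b + #A + 1 ≤ #{a ∈ A | G.Adj b a} + Fintype.card V := by
  have hout : G.neighborFinset b \ A ⊆ (insert b A)ᶜ := by
    intro x hx
    simp only [mem_sdiff, mem_neighborFinset] at hx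
    simp only [mem_compl, mem_insert, not_or]
    exact ⟨hx.1.ne', hx.2⟩
  have hin : G.neighborFinset b ∩ A = {a ∈ A | G.Adj b a} := by
    ext a; simp [and_comm]
  have hout_card := card_le_card hout
  have hsplit := card_inter_add_card_sdiff (G.neighborFinset b) A
  have hinsert := card_le_univ (insert b A)
  rw [card_compl, card_insert_of_notMem hb] at hout_card
  rw [card_insert_of_notMem hb] at hinsert
  rw [← card_neighborFinset_eq_degree, ← hin]
  omega

theorem sum_degree_add_le {A B : Finset V} (hAB : Disjoint A B) :
    ∑ b ∈ B, G.degree b + #B * (#A + 1) ≤ ∑ a ∈ A, G.degree a + #B * Fintype.card V := by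
  have hB : ∑ b ∈ B, (G.degree b + (#A + 1)) ≤ ∑ b ∈ B, (#{a ∈ A | G.Adj b a} + Fintype.card V) :=
    sum_le_sum fun b hb => by
      rw [← add_assoc]; exact G.degree_add_card_add_one_le (disjoint_right.mp hAB hb)
  have hA : ∑ b ∈ B, #{a ∈ A | G.Adj b a} ≤ ∑ a ∈ A, G.degree a := by
    change ∑ b ∈ B, #(bipartiteAbove G.Adj A b) ≤ _
    rw [sum_card_bipartiteAbove_eq_sum_card_bipartiteBelow]
    refine sum_le_sum fun a _ => ?_
    rw [← card_neighborFinset_eq_degree]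
    exact card_le_card fun b hb => by simpa [G.adj_comm] using (mem_filter.mp hb).2
  simp only [sum_add_distrib, sum_const, smul_eq_mul] at hB
  linarith

theorem eq_empty_of_degree_add_card_compl_le {A : Finset V} {f : V → V} (hf : Set.InjOn f A)
    (hfA : ∀ a ∈ A, f a ∉ A) (hdeg : ∀ a ∈ A, G.degree a + #Aᶜ ≤ G.degree (f a)) : A = ∅ := by
  have hdisj : Disjoint A (A.image f) := by
    simpa [disjoint_right] using hfA
  have hsum := G.sum_degree_add_le hdisj
  rw [card_image_of_injOn hf, sum_image hf] at hsum
  have hgain : ∑ a ∈ A, G.degree a + #A * #Aᶜ ≤ ∑ a ∈ A, G.degree (f a) := by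
    simpa [sum_add_distrib] using sum_le_sum hdeg
  have hcard : Fintype.card V = #A + #Aᶜ := (card_add_card_compl A).symm
  rw [hcard] at hsum
  have : #A = 0 := by nlinarith
  exact card_eq_zero.mp this

theorem exists_degree_lt_degree_add {n s m : ℕ} (σ : Fin n ≃ V) (hs : 0 < s) (hsm : s ≤ m)
    (hn : n = s + m) :
    ∃ i j : Fin n, (j : ℕ) = i + m ∧ G.degree (σ j) < G.degree (σ i) + m := by
  by_contra! hgain
  have : NeZero n := ⟨by omega⟩
  let c : Fin n := ⟨m, by omega⟩
  have hshift : ∀ i : Fin n, (i : ℕ) < s → ((i + c : Fin n) : ℕ) = i + m := fun i hi => by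
    rw [Fin.val_add, Nat.mod_eq_of_lt (by simp [c]; omega)]
  set A := (Iio (⟨s, by omega⟩ : Fin n)).map σ.toEmbedding
  have hA : ∀ a, a ∈ A ↔ (σ.symm a : ℕ) < s := fun a => by simp [A, mem_map_equiv, Fin.lt_def]
  have hAc : #Aᶜ = m := by simp [A, card_compl, ← Fintype.card_congr σ]; omega
  have hempty := G.eq_empty_of_degree_add_card_compl_le (A := A) (f := σ ∘ (· + c) ∘ σ.symm)
    (σ.injective.comp ((add_left_injective c).comp σ.symm.injective)).injOn
    (fun a ha => by
      simp only [hA, Function.comp_apply, Equiv.symm_apply_apply, hshift _ ((hA a).1 ha)]; omega)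
    (fun a ha => by
      have := hgain _ _ (hshift _ ((hA a).1 ha))
      rwa [Equiv.apply_symm_apply, ← hAc] at this)
  have h0 : σ 0 ∈ A := (hA _).2 (by simpa using hs)
  simp [hempty] at h0

end SimpleGraph

namespace Fin

variable {n k : ℕ}

theorem exists_card_eq_forall_abs_sub_lt {α : Type*} {w : α → ℕ} (σ : Fin n ≃ α)
    (hw : Monotone (w ∘ σ)) {a b : Fin n} (hab : (b : ℕ) = a + k) (hlt : w (σ b) < w (σ a) + k) :
    ∃ S : Finset α, #S = k + 1 ∧ ∀ u ∈ S, ∀ v ∈ S, |(w u : ℤ) - w v| < k := by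
  refine ⟨(Icc a b).map σ.toEmbedding, by simp only [card_map, Fin.card_Icc]; omega, ?_⟩
  intro u hu v hv
  obtain ⟨i, hi, rfl⟩ := mem_map.mp hu
  obtain ⟨j, hj, rfl⟩ := mem_map.mp hv
  rw [mem_Icc] at hi hj
  have hi₁ : w (σ a) ≤ w (σ i) := hw hi.1
  have hi₂ : w (σ i) ≤ w (σ b) := hw hi.2
  have hj₁ : w (σ a) ≤ w (σ j) := hw hj.1
  have hj₂ : w (σ j) ≤ w (σ b) := hw hj.2
  rw [Equiv.coe_toEmbedding, abs_sub_lt_iff]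
  omega

theorem add_mul_le_of_forall_add_le {d : Fin n → ℕ}
    (h : ∀ a b : Fin n, (b : ℕ) = a + k → d a + k ≤ d b) :
    ∀ (m : ℕ) {a b : Fin n}, (b : ℕ) = a + m * k → d a + m * k ≤ d b
  | 0, a, b, hab => by obtain rfl : b = a := Fin.ext (by simpa using hab); simp
  | m + 1, a, b, hab => by
    rw [add_one_mul] at hab ⊢
    have hc : (a : ℕ) + m * k < n := by omega
    have := add_mul_le_of_forall_add_le h m (b := ⟨a + m * k, hc⟩) rfl
    have := h ⟨a + m * k, hc⟩ b (by simp [hab, add_assoc])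
    omega

end Fin

theorem stmt_0 (n k : ℕ) (hk : 1 ≤ k) (hnk : k < n)
    (G : SimpleGraph (Fin n)) [DecidableRel G.Adj] :
    ∃ S : Finset (Fin n), S.card = k + 1 ∧
      ∀ u ∈ S, ∀ v ∈ S, |(G.degree u : ℤ) - (G.degree v : ℤ)| < k := by
  by_contra! hspread
  obtain ⟨σ, hmono⟩ : ∃ σ : Fin n ≃ Fin n, Monotone ((fun v => G.degree v) ∘ σ) :=
    ⟨_, Tuple.monotone_sort _⟩
  have hstep : ∀ a b : Fin n, (b : ℕ) = a + k → G.degree (σ a) + k ≤ G.degree (σ b) := by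
    intro a b hab
    by_contra! hlt
    obtain ⟨S, hS, hSspread⟩ := Fin.exists_card_eq_forall_abs_sub_lt σ hmono hab hlt
    obtain ⟨u, hu, v, hv, huv⟩ := hspread S hS
    exact huv.not_gt (hSspread u hu v hv)
  obtain ⟨q, s, hs, hsk, hq, hn⟩ : ∃ q s, 0 < s ∧ s ≤ k ∧ 0 < q ∧ n = s + q * k :=
    ⟨(n - 1) / k, (n - 1) % k + 1, by omega, Nat.mod_lt _ hk, Nat.div_pos (by omega) hk,
      by have := Nat.mod_add_div (n - 1) k; rw [mul_comm] at this; omega⟩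
  obtain ⟨i, j, hij, hlt⟩ :=
    G.exists_degree_lt_degree_add σ hs (hsk.trans (Nat.le_mul_of_pos_left k hq)) hn
  exact hlt.not_ge (Fin.add_mul_le_of_forall_add_le hstep q hij)
end

section
/- If the degrees d_1 ≤ d_2 ≤ ... ≤ d_n of the vertices of a simple graph on n > k vertices satisfy d_{s+k} ≥ d_s + k for all s = 1, ..., n−k, then a contradiction follows; i.e., there exists some s with d_{s+k} < d_s + k. -/
/-!
Iterating the hypothesis gives `d i ≥ d (i % k) + k * (i / k)`. Let `a = min k (n - k)` and let
`S` be the `a` largest indices: reduction mod `k` maps `S` injectively into `Sᶜ`, and the total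
gain over `S` is `k (n - k)`, so `∑_S d ≥ ∑_{S % k} d + k (n - k)`. On the other hand the
Erdős–Gallai inequality for `S` gives
`∑_S d ≤ a (a - 1) + ∑_{Sᶜ} min(d, a) ≤ a (a - 1) + ∑_{S % k} d + (n - 2a) a`,
and `a (a - 1) + (n - 2a) a = a (n - a) - a = k (n - k) - a < k (n - k)`.
-/

open Finset

namespace SimpleGraph

variable {V : Type*} [Fintype V] [DecidableEq V] (G : SimpleGraph V) [DecidableRel G.Adj]

/-- The necessity half of the Erdős–Gallai theorem. -/
theorem sum_degree_le_card_mul_add_sum_min (A : Finset V) :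
    ∑ v ∈ A, G.degree v ≤ #A * (#A - 1) + ∑ v ∈ Aᶜ, min (G.degree v) #A := by
  have degree_split (v : V) :
      G.degree v = #{u ∈ A | G.Adj v u} + #{u ∈ Aᶜ | G.Adj v u} := by
    rw [← card_neighborFinset_eq_degree, ← card_union_of_disjoint
      (disjoint_filter_filter disjoint_compl_right), ← filter_union, union_compl]
    congr 1
    ext u
    simp
  have inside (v : V) (hv : v ∈ A) : #{u ∈ A | G.Adj v u} ≤ #A - 1 := by
    rw [← card_erase_of_mem hv]
    exact card_le_card fun u hu => by
      rw [mem_filter] at hu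
      exact mem_erase.2 ⟨hu.2.ne', hu.1⟩
  have outside (u : V) : #{v ∈ A | G.Adj v u} ≤ min (G.degree u) #A := by
    refine le_min (card_le_card fun v hv => ?_) (card_filter_le _ _)
    rw [mem_filter] at hv
    exact (G.mem_neighborFinset u v).2 hv.2.symm
  calc ∑ v ∈ A, G.degree v
      = ∑ v ∈ A, #{u ∈ A | G.Adj v u} + ∑ v ∈ A, #{u ∈ Aᶜ | G.Adj v u} := by
        rw [← sum_add_distrib]
        exact sum_congr rfl fun v _ => degree_split v
    _ ≤ #A * (#A - 1) + ∑ u ∈ Aᶜ, #{v ∈ A | G.Adj v u} := by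
        gcongr
        · exact (sum_le_sum inside).trans_eq (by simp)
        · exact (sum_card_bipartiteAbove_eq_sum_card_bipartiteBelow G.Adj).le
    _ ≤ #A * (#A - 1) + ∑ u ∈ Aᶜ, min (G.degree u) #A := by
        gcongr with u
        exact outside u

end SimpleGraph

theorem Finset.sum_min_le_sum_add_card_sdiff_mul {ι : Type*} [DecidableEq ι] {s t : Finset ι}
    (hts : t ⊆ s) (f : ι → ℕ) (m : ℕ) :
    ∑ i ∈ s, min (f i) m ≤ ∑ i ∈ t, f i + #(s \ t) * m := by
  rw [← sum_sdiff hts, add_comm]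
  gcongr
  · exact min_le_left _ _
  · exact (sum_le_sum fun i _ => min_le_right _ _).trans_eq (by simp)

theorem Nat.sum_Ico_add_div_self {k : ℕ} (hk : 0 < k) (m : ℕ) :
    ∑ j ∈ Ico m (m + k), j / k = m := by
  induction m with
  | zero => exact sum_eq_zero fun j hj => Nat.div_eq_of_lt (by simpa using (mem_Ico.1 hj).2)
  | succ m ih =>
    have shift := sum_Ico_succ_top (show m ≤ m + k by omega) (fun j => j / k)
    rw [sum_eq_sum_Ico_succ_bot (by omega), ih, Nat.add_div_right _ hk] at shift
    rw [add_right_comm]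
    omega

theorem Nat.sum_Ico_sub_min_div {n k : ℕ} (hk : 0 < k) (hkn : k ≤ n) :
    ∑ j ∈ Ico (n - min k (n - k)) n, j / k = n - k := by
  rcases le_total k (n - k) with h | h
  · rw [min_eq_left h, show n = n - k + k by omega, Nat.add_sub_cancel]
    exact Nat.sum_Ico_add_div_self hk _
  · rw [min_eq_right h, show n - (n - k) = k by omega]
    have one (j : ℕ) (hj : j ∈ Ico k n) : j / k = 1 := by
      rw [mem_Ico] at hj
      rw [Nat.div_eq_sub_div hk hj.1, Nat.div_eq_of_lt (by omega)]
    simp [sum_congr rfl one]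

theorem Nat.min_mul_sub_min {n k : ℕ} (hkn : k ≤ n) :
    min k (n - k) * (n - min k (n - k)) = k * (n - k) := by
  rcases le_total k (n - k) with h | h
  · rw [min_eq_left h]
  · rw [min_eq_right h, Nat.sub_sub_self hkn, Nat.mul_comm]

section DegreeSequence

variable {n k : ℕ}

def residueMod (k : ℕ) (i : Fin n) : Fin n := ⟨i % k, (Nat.mod_le i k).trans_lt i.isLt⟩

def topIndices (n a : ℕ) : Finset (Fin n) := {i | n - a ≤ (i : ℕ)}

theorem sum_topIndices {M : Type*} [AddCommMonoid M] (a : ℕ) (f : ℕ → M) :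
    ∑ i ∈ topIndices n a, f i = ∑ j ∈ Ico (n - a) n, f j := by
  rw [topIndices, sum_filter, Fin.sum_univ_eq_sum_range (fun j => if n - a ≤ j then f j else 0),
    ← sum_filter]
  congr 1
  ext j
  simp only [mem_filter, mem_range, mem_Ico]
  omega

theorem card_topIndices {a : ℕ} (ha : a ≤ n) : #(topIndices n a) = a := by
  rw [card_eq_sum_ones, sum_topIndices a (fun _ => 1), sum_const, Nat.card_Ico, smul_eq_mul,
    mul_one]
  omega

theorem injOn_residueMod_topIndices {a : ℕ} (ha : a ≤ k) :
    Set.InjOn (residueMod k) (topIndices n a : Set (Fin n)) := by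
  intro x hx y hy hxy
  simp only [topIndices, mem_coe, mem_filter, mem_univ, true_and] at hx hy
  have hmod : (x : ℕ) ≡ y [MOD k] := congrArg Fin.val hxy
  exact Fin.ext (hmod.eq_of_abs_lt (by rw [abs_sub_lt_iff]; omega))

theorem image_residueMod_topIndices_subset {a : ℕ} (hk : 0 < k) (ha : a ≤ n - k) :
    (topIndices n a).image (residueMod k) ⊆ (topIndices n a)ᶜ := by
  intro j hj
  obtain ⟨i, -, rfl⟩ := mem_image.1 hj
  have := Nat.mod_lt i hk
  have := (Nat.mod_le i k).trans_lt i.isLt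
  simp only [topIndices, mem_compl, mem_filter, mem_univ, true_and, residueMod]
  omega

variable {d : Fin n → ℕ}

theorem add_mul_le_of_forall_add_le
    (H : ∀ (s : ℕ) (h : s + k < n), d ⟨s, by omega⟩ + k ≤ d ⟨s + k, h⟩) (i : Fin n) :
    d (residueMod k i) + k * (i / k) ≤ d i := by
  rcases Nat.eq_zero_or_pos k with rfl | hk
  · simp [residueMod]
  obtain ⟨i, hi⟩ := i
  induction i using Nat.strong_induction_on with
  | _ i ih =>
  rcases lt_or_ge i k with hik | hki
  · simp [residueMod, Nat.mod_eq_of_lt hik, Nat.div_eq_of_lt hik]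
  have hres : residueMod k ⟨i, hi⟩ = residueMod k ⟨i - k, by omega⟩ :=
    Fin.ext (Nat.mod_eq_sub_mod hki)
  calc d (residueMod k ⟨i, hi⟩) + k * (i / k)
      = d (residueMod k ⟨i - k, by omega⟩) + k * ((i - k) / k) + k := by
        rw [hres, Nat.div_eq_sub_div hk hki, Nat.mul_succ, add_assoc]
    _ ≤ d ⟨i - k, by omega⟩ + k := by gcongr; exact ih (i - k) (by omega) _
    _ ≤ d ⟨i - k + k, by omega⟩ := H (i - k) (by omega)
    _ = d ⟨i, hi⟩ := by congr; omega

theorem sum_image_residueMod_add_le (hk : 0 < k) (hkn : k ≤ n)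
    (H : ∀ (s : ℕ) (h : s + k < n), d ⟨s, by omega⟩ + k ≤ d ⟨s + k, h⟩) :
    ∑ i ∈ (topIndices n (min k (n - k))).image (residueMod k), d i + k * (n - k)
      ≤ ∑ i ∈ topIndices n (min k (n - k)), d i := by
  have hdiv := Nat.sum_Ico_sub_min_div hk hkn
  rw [← sum_topIndices] at hdiv
  calc _ = ∑ i ∈ topIndices n (min k (n - k)), (d (residueMod k i) + k * (i / k)) := by
        rw [sum_image (injOn_residueMod_topIndices (min_le_left _ _)), sum_add_distrib,
          ← mul_sum, hdiv]
    _ ≤ _ := sum_le_sum fun i _ => add_mul_le_of_forall_add_le H i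

end DegreeSequence

theorem stmt_1 (n k : ℕ) (hk : 1 ≤ k) (hkn : k < n)
    (G : SimpleGraph (Fin n)) [DecidableRel G.Adj]
    (d : Fin n → ℕ)
    (e : Fin n ≃ Fin n) (hd : ∀ i, d i = G.degree (e i)) :
    ∃ s : ℕ, ∃ h : s + k < n,
      d ⟨s + k, h⟩ < d ⟨s, by omega⟩ + k := by
  by_contra! H
  have hdeg (i : Fin n) : (G.comap e).degree i = d i := by
    rw [hd]
    exact ((SimpleGraph.Iso.comap e G).degree_eq i).symm
  set a := min k (n - k)
  set S := topIndices n a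
  have ha : 1 ≤ a := le_min hk (by omega)
  have hS : #S = a := card_topIndices (by omega)
  have hTS : S.image (residueMod k) ⊆ Sᶜ :=
    image_residueMod_topIndices_subset hk (min_le_right k (n - k))
  have gain : ∑ i ∈ S.image (residueMod k), d i + k * (n - k) ≤ ∑ i ∈ S, d i :=
    sum_image_residueMod_add_le hk hkn.le H
  have erdosGallai := (G.comap e).sum_degree_le_card_mul_add_sum_min S
  simp only [hdeg, hS] at erdosGallai
  have tail := sum_min_le_sum_add_card_sdiff_mul hTS d a
  rw [card_sdiff_of_subset hTS, card_compl, Fintype.card_fin, hS,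
    card_image_of_injOn (injOn_residueMod_topIndices (min_le_left _ _)), hS] at tail
  have hsum : a * (a - 1) + (n - a - a) * a + a = k * (n - k) := by
    rw [← Nat.min_mul_sub_min hkn.le, Nat.mul_comm (n - a - a) a, ← Nat.mul_add, ← Nat.mul_succ]
    congr 1
    omega
  omega
end

section
/- For every n > k ≥ 1, there exists a simple graph G on n vertices such that the number of unordered pairs of vertices {x,y} with |deg(x) − deg(y)| < k equals f0(n,k) := (⌈n/k⌉ − 2)·C(k,2) + C(k+1,2) + C(n − k(⌈n/k⌉ − 1) − 1, 2). -/
open scoped Classical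

/-- Number of unordered pairs of distinct vertices whose degrees differ by less than `k`. -/
noncomputable def closeCount (n k : ℕ) (G : SimpleGraph (Fin n)) : ℕ :=
  (Finset.univ.filter (fun p : Fin n × Fin n =>
    p.1 < p.2 ∧ |(G.degree p.1 : ℤ) - (G.degree p.2 : ℤ)| < k)).card

/-- `f0 n k`, where `(n + k - 1) / k = ⌈n/k⌉` for `k > 0`. -/
def f0 (n k : ℕ) : ℕ :=
  ((n + k - 1) / k - 2) * Nat.choose k 2 + Nat.choose (k + 1) 2 +
    Nat.choose (n - k * ((n + k - 1) / k - 1) - 1) 2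

/-!
Put `p = ⌈n/k⌉ - 1` and `r = n - pk - 1`. Split the vertices into groups `0, …, p`: groups
`x < p` have `k` vertices, except the middle group `p / 2` which has `k + 1`, and group `p` has
`r` vertices. Join distinct `u, v` when `g u + g v ≥ p`. A vertex of group `x` is adjacent to
every vertex outside the groups `< p - x`, except to itself when `2x ≥ p`; the extra vertex of
the middle group lies in a group `< p - x` exactly when `2x < p`, so in either case the vertex
has degree `r + kx`. Degrees of different groups thus differ by at least `k`, and the close pairs
are exactly the pairs inside a group.
-/

open Finset

theorem exists_card_fiber_eq {V : Type*} [Fintype V] (q : ℕ) (s : ℕ → ℕ)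
    (hV : Fintype.card V = ∑ i ∈ range q, s i) :
    ∃ g : V → ℕ, (∀ v, g v < q) ∧ ∀ i < q, #{v | g v = i} = s i := by
  have hcard : Fintype.card V = Fintype.card ((i : Fin q) × Fin (s i)) := by
    simp [hV, Fin.sum_univ_eq_sum_range]
  let e := Fintype.equivOfCardEq hcard
  refine ⟨fun v => (e v).1, fun v => (e v).1.isLt, fun i hi => ?_⟩
  calc #{v | ((e v).1 : ℕ) = i}
      = #(({⟨i, hi⟩} : Finset (Fin q)).sigma fun j => (univ : Finset (Fin (s j)))) :=
        card_equiv e (by intro v; simp [Fin.ext_iff])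
    _ = s i := by simp

theorem card_filter_lt_eq_sum_card_fiber {V : Type*} [Fintype V] (g : V → ℕ) (t : ℕ) :
    #{v | g v < t} = ∑ i ∈ range t, #{v | g v = i} := by
  rw [card_eq_sum_card_fiberwise (f := g) (t := range t) fun v hv => by simpa using hv]
  refine sum_congr rfl fun i hi => ?_
  rw [filter_filter]
  congr 1
  ext v
  simp only [mem_filter, mem_univ, true_and]
  exact ⟨And.right, fun h => ⟨h ▸ mem_range.1 hi, h⟩⟩

theorem card_filter_lt_and_eq_eq_sum_choose {α β : Type*} [Fintype α] [LinearOrder α]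
    [DecidableEq β] (g : α → β) (T : Finset β) (hT : ∀ a, g a ∈ T) :
    #{p : α × α | p.1 < p.2 ∧ g p.1 = g p.2} = ∑ b ∈ T, (#{a | g a = b}).choose 2 := by
  rw [card_eq_sum_card_fiberwise (f := fun p : α × α => g p.1) (t := T) fun p _ => hT p.1]
  refine sum_congr rfl fun b _ => ?_
  rw [← card_product_filter_lt, filter_filter]
  congr 1
  ext p
  simp only [mem_filter, mem_univ, true_and, mem_product]
  constructor
  · rintro ⟨⟨hlt, heq⟩, rfl⟩
    exact ⟨⟨rfl, heq.symm⟩, hlt⟩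
  · rintro ⟨⟨h1, h2⟩, hlt⟩
    exact ⟨⟨hlt, h1.trans h2.symm⟩, h1⟩

theorem abs_natCast_add_mul_sub_lt_iff {c k x y : ℕ} (hk : 0 < k) :
    |((c + k * x : ℕ) : ℤ) - ((c + k * y : ℕ) : ℤ)| < k ↔ x = y := by
  push_cast
  rw [add_sub_add_left_eq_sub, ← mul_sub, abs_mul, Nat.abs_cast,
    mul_lt_iff_lt_one_right (by positivity), Int.abs_lt_one_iff, sub_eq_zero, Nat.cast_inj]

theorem mul_ceil_div_sub_one_lt {n k : ℕ} (hn : 0 < n) : k * ((n + k - 1) / k - 1) < n := by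
  have := Nat.mul_div_le (n + k - 1) k
  rw [Nat.mul_sub_one]
  omega

namespace SimpleGraph

variable {V : Type*}

def threshold (g : V → ℕ) (t : ℕ) : SimpleGraph V where
  Adj u v := u ≠ v ∧ t ≤ g u + g v
  symm := ⟨fun _ _ h => ⟨h.1.symm, add_comm (g _) _ ▸ h.2⟩⟩
  loopless := ⟨fun _ h => h.1 rfl⟩

theorem degree_threshold_add [Fintype V] (g : V → ℕ) (t : ℕ) (v : V)
    [Fintype ((threshold g t).neighborSet v)] :
    (threshold g t).degree v + (if t ≤ 2 * g v then 1 else 0) = #{w | t ≤ g v + g w} := by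
  have hnbr : (threshold g t).neighborFinset v = ({w | t ≤ g v + g w} : Finset V).erase v := by
    ext w
    rw [mem_neighborFinset]
    simp [threshold, eq_comm]
  rw [← card_neighborFinset_eq_degree, hnbr]
  split_ifs with hv
  · exact card_erase_add_one (by simp; omega)
  · rw [erase_eq_of_notMem (by simp; omega), add_zero]

end SimpleGraph

def groupSizes (p k r i : ℕ) : ℕ :=
  if i < p then k + if i = p / 2 then 1 else 0 else r

section groupSizes

variable {p k r : ℕ}

theorem sum_range_groupSizes_of_le {t : ℕ} (ht : t ≤ p) :
    ∑ i ∈ range t, groupSizes p k r i = t * k + if p / 2 < t then 1 else 0 := by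
  rw [sum_congr rfl fun i hi => by rw [groupSizes, if_pos ((mem_range.1 hi).trans_le ht)],
    sum_add_distrib, sum_const, card_range, smul_eq_mul, sum_ite_eq']
  simp only [mem_range]

theorem sum_range_groupSizes (hp : 1 ≤ p) :
    ∑ i ∈ range (p + 1), groupSizes p k r i = p * k + 1 + r := by
  rw [sum_range_succ, sum_range_groupSizes_of_le le_rfl, if_pos (by omega), groupSizes,
    if_neg (lt_irrefl p)]

theorem sum_range_choose_groupSizes (hp : 1 ≤ p) :
    ∑ i ∈ range (p + 1), (groupSizes p k r i).choose 2
      = (p - 1) * k.choose 2 + (k + 1).choose 2 + r.choose 2 := by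
  have hchoose : ∀ i ∈ range p, (groupSizes p k r i).choose 2
      = k.choose 2 + if i = p / 2 then k else 0 := fun i hi => by
    rw [groupSizes, if_pos (mem_range.1 hi)]
    split_ifs <;> simp [Nat.choose_succ_succ, add_comm]
  rw [sum_range_succ, sum_congr rfl hchoose, sum_add_distrib, sum_const, card_range, smul_eq_mul,
    sum_ite_eq', if_pos (mem_range.2 (by omega)), groupSizes, if_neg (lt_irrefl p),
    Nat.choose_succ_succ, Nat.choose_one_right]
  obtain ⟨p, rfl⟩ := Nat.exists_eq_add_of_le' hp
  simp only [Nat.add_sub_cancel, add_mul, one_mul]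
  ring

open SimpleGraph in
theorem degree_threshold_groupSizes {V : Type*} [Fintype V]
    (hV : Fintype.card V = p * k + 1 + r) (g : V → ℕ) (hg : ∀ v, g v < p + 1)
    (hfiber : ∀ i < p + 1, #{v | g v = i} = groupSizes p k r i) (v : V)
    [Fintype ((threshold g p).neighborSet v)] :
    (threshold g p).degree v = r + k * g v := by
  have hv := hg v
  have hfar : #{w | p ≤ g v + g w} + #{w | g w < p - g v} = Fintype.card V := by
    have hcompl : univ.filter (fun w => g w < p - g v) = univ.filter fun w => ¬ p ≤ g v + g w := by
      ext w
      simp only [mem_filter, mem_univ, true_and]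
      omega
    rw [hcompl, card_filter_add_card_filter_not, card_univ]
  have hnear : #{w | g w < p - g v} = (p - g v) * k + if p / 2 < p - g v then 1 else 0 := by
    rw [card_filter_lt_eq_sum_card_fiber, ← sum_range_groupSizes_of_le (Nat.sub_le p (g v))]
    exact sum_congr rfl fun i hi => hfiber i (by simp at hi; omega)
  have hself := degree_threshold_add g p v
  have hsplit : (p - g v) * k + g v * k = p * k := by
    rw [← add_mul, Nat.sub_add_cancel (by omega)]
  rw [mul_comm k]
  split_ifs at hself hnear <;> omega

theorem exists_closeCount_eq (n : ℕ) (hk : 0 < k) (hp : 1 ≤ p) (hn : n = p * k + 1 + r) :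
    ∃ G : SimpleGraph (Fin n),
      closeCount n k G = (p - 1) * k.choose 2 + (k + 1).choose 2 + r.choose 2 := by
  obtain ⟨g, hg, hfiber⟩ := exists_card_fiber_eq (V := Fin n) (p + 1) (groupSizes p k r)
    (by rw [Fintype.card_fin, sum_range_groupSizes hp, hn])
  refine ⟨SimpleGraph.threshold g p, ?_⟩
  have hdeg := degree_threshold_groupSizes (by rw [Fintype.card_fin, hn]) g hg hfiber
  calc closeCount n k (SimpleGraph.threshold g p)
      = #{q : Fin n × Fin n | q.1 < q.2 ∧ g q.1 = g q.2} := by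
        unfold closeCount
        congr 1
        refine filter_congr fun q _ => and_congr_right fun _ => ?_
        rw [hdeg q.1, hdeg q.2]
        exact abs_natCast_add_mul_sub_lt_iff hk
    _ = ∑ i ∈ range (p + 1), (#{v | g v = i}).choose 2 :=
        card_filter_lt_and_eq_eq_sum_choose g _ fun v => mem_range.2 (hg v)
    _ = ∑ i ∈ range (p + 1), (groupSizes p k r i).choose 2 :=
        sum_congr rfl fun i hi => by rw [hfiber i (mem_range.1 hi)]
    _ = _ := sum_range_choose_groupSizes hp

end groupSizes

theorem stmt_3 (n k : ℕ) (hk : 1 ≤ k) (hnk : k < n) :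
    ∃ G : SimpleGraph (Fin n), closeCount n k G = f0 n k := by
  set q := (n + k - 1) / k with hq
  have hq2 : 2 ≤ q := (Nat.le_div_iff_mul_le hk).2 (by omega)
  have hlt : k * (q - 1) < n := mul_ceil_div_sub_one_lt (by omega)
  obtain ⟨G, hG⟩ := exists_closeCount_eq (p := q - 1) (r := n - k * (q - 1) - 1) n hk
    (by omega) (by rw [mul_comm]; omega)
  refine ⟨G, hG.trans ?_⟩
  rw [f0, ← hq, show q - 1 - 1 = q - 2 by omega]
end

section
/- For any simple graph G on n ≥ 3 vertices, the number of unordered pairs of distinct vertices whose degrees differ by at most 1 is at least ⌈n/2⌉ + 1. -/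
/-!
Sort the degrees as `x 0 ≤ ⋯ ≤ x (n - 1)`. A vertex of degree `0` and one of degree `n - 1`
cannot coexist, so the spread `x (n - 1) - x 0` is at most `n - 2`. The `n - 1` steps
`x (k + 1) - x k` add up to the spread, so at most `(n - 2) / 2` of them exceed `1`: this gives
`⌈n / 2⌉` close pairs `{k, k + 1}`. The `n - 2` steps `x (k + 2) - x k` add up to
`(x (n - 1) - x 1) + (x (n - 2) - x 0) ≤ 2 (n - 2)`, so one of them is at most `1`, giving one
more close pair `{k, k + 2}`, unless both extreme degrees `δ` and `δ + n - 2` are repeated.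
That is impossible: for `δ = 0` a vertex of degree `n - 2` would miss two isolated vertices,
and for `δ = 1` a vertex of degree `1` would be adjacent to two vertices of degree `n - 1`.
-/

open scoped Classical

open Finset

theorem two_mul_add_le_two_mul_card_filter_add (y : ℕ → ℕ) {m : ℕ}
    (hy : ∀ i < m, y i ≤ y (i + 1)) :
    2 * m + y 0 ≤ 2 * #{i ∈ range m | y (i + 1) ≤ y i + 1} + y m := by
  induction m with
  | zero => simp
  | succ m ih =>
    have ih := ih fun i hi => hy i (by omega)
    have hm := hy m (by omega)
    rw [range_add_one, filter_insert]
    split_ifs with h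
    · rw [card_insert_of_notMem (by simp)]
      omega
    · omega

theorem div_two_add_one_le_card_filter_add_card_filter (x : ℕ → ℕ) {n : ℕ} (hn : 3 ≤ n)
    (hx : MonotoneOn x (Set.Iio n)) (hspread : x (n - 1) ≤ x 0 + (n - 2))
    (hrepeat : x 1 = x 0 → x (n - 1) = x (n - 2) → x (n - 1) < x 0 + (n - 2)) :
    (n + 1) / 2 + 1 ≤
      #{k ∈ range (n - 1) | x (k + 1) ≤ x k + 1} + #{k ∈ range (n - 2) | x (k + 2) ≤ x k + 1} := by
  have hstep : ∀ i, i + 1 < n → x i ≤ x (i + 1) := fun i hi =>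
    hx (Set.mem_Iio.mpr (by omega)) (Set.mem_Iio.mpr hi) (Nat.le_succ i)
  have hS := two_mul_add_le_two_mul_card_filter_add x (m := n - 1) fun i hi => hstep i (by omega)
  have hE : 2 * (n - 2) + (x 0 + x 1) ≤
      2 * #{k ∈ range (n - 2) | x (k + 2) ≤ x k + 1} + (x (n - 2) + x (n - 1)) := by
    -- the steps of `k ↦ x k + x (k + 1)` are the steps of length two of `x`
    have h := two_mul_add_le_two_mul_card_filter_add (fun i => x i + x (i + 1)) (m := n - 2)
      fun i hi => by have := hstep i (by omega); have := hstep (i + 1) (by omega); omega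
    rwa [filter_congr (q := fun k => x (k + 2) ≤ x k + 1) fun i _ => by
      change x (i + 1) + x (i + 2) ≤ x i + x (i + 1) + 1 ↔ _; omega,
      show n - 2 + 1 = n - 1 by omega, zero_add] at h
  have h1 : x 0 ≤ x 1 := hstep 0 (by omega)
  have h2 := hstep (n - 2) (by omega)
  rw [show n - 2 + 1 = n - 1 by omega] at h2
  omega

theorem card_filter_add_card_filter_le_card_filter_lt (R : ℕ → ℕ → Prop) [DecidableRel R]
    (n : ℕ) :
    #{k ∈ range (n - 1) | R k (k + 1)} + #{k ∈ range (n - 2) | R k (k + 2)} ≤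
      #{p ∈ range n ×ˢ range n | p.1 < p.2 ∧ R p.1 p.2} := by
  have step_inj (d : ℕ) : Function.Injective fun k : ℕ => (k, k + d) :=
    fun _ _ h => (Prod.mk.inj h).1
  rw [← card_image_of_injective _ (step_inj 1), ← card_image_of_injective _ (step_inj 2),
    ← card_union_of_disjoint]
  · refine card_le_card (union_subset ?_ ?_) <;>
      · intro p hp
        simp only [mem_image, mem_filter, mem_range] at hp
        obtain ⟨k, ⟨hk, hR⟩, rfl⟩ := hp
        simp only [mem_filter, mem_product, mem_range]
        exact ⟨⟨by omega, by omega⟩, by omega, hR⟩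
  · simp only [disjoint_left, mem_image]
    rintro _ ⟨k, -, rfl⟩ ⟨l, -, h⟩
    simp only [Prod.mk.injEq] at h
    omega

theorem card_filter_lt_le_card_filter_lt_of_injOn {V : Type*} [Fintype V] [LinearOrder V]
    {r : V → V → Prop} [DecidableRel r] (hr : ∀ a b, r a b → r b a) {R : ℕ → ℕ → Prop}
    [DecidableRel R] {e : ℕ → V} {n : ℕ}
    (he : Set.InjOn e (Set.Iio n)) (hR : ∀ i j, i < j → j < n → R i j → r (e i) (e j)) :
    #{p ∈ range n ×ˢ range n | p.1 < p.2 ∧ R p.1 p.2} ≤ #{p : V × V | p.1 < p.2 ∧ r p.1 p.2} := by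
  refine card_le_card_of_injOn (fun p => (min (e p.1) (e p.2), max (e p.1) (e p.2))) ?_ ?_
  · intro p hp
    simp only [coe_filter, mem_product, mem_range, Set.mem_ofPred_eq] at hp
    obtain ⟨⟨h1, h2⟩, hlt, hpR⟩ := hp
    simp only [coe_filter, mem_univ, true_and, Set.mem_ofPred_eq]
    rcases lt_or_gt_of_ne (he.ne h1 h2 hlt.ne) with h | h
    · simpa [min_eq_left h.le, max_eq_right h.le, h] using hR _ _ hlt h2 hpR
    · simpa [min_eq_right h.le, max_eq_left h.le, h] using hr _ _ (hR _ _ hlt h2 hpR)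
  · intro p hp q hq hpq
    simp only [coe_filter, mem_product, mem_range, Set.mem_ofPred_eq] at hp hq
    have key : ∀ a b, a < n → b < n → e a = e b → a = b := fun a b ha hb h => he ha hb h
    simp only [min_def, max_def] at hpq
    split_ifs at hpq <;> obtain ⟨h1, h2⟩ := Prod.mk.inj hpq <;>
      have := key _ _ (by omega) (by omega) h1 <;> have := key _ _ (by omega) (by omega) h2 <;>
      ext <;> omega

theorem Fin.exists_injOn_monotoneOn_comp {α : Type*} [LinearOrder α] {n : ℕ} (hn : 0 < n)
    (f : Fin n → α) :
    ∃ e : ℕ → Fin n, Set.InjOn e (Set.Iio n) ∧ MonotoneOn (f ∘ e) (Set.Iio n) := by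
  refine ⟨fun k => Tuple.sort f ⟨min k (n - 1), by omega⟩, ?_, ?_⟩
  · intro i hi j hj h
    have := Fin.val_eq_of_eq ((Tuple.sort f).injective h)
    simp only [Set.mem_Iio] at hi hj this
    omega
  · intro i hi j hj hij
    exact Tuple.monotone_sort f (show (⟨min i (n - 1), _⟩ : Fin n) ≤ ⟨min j (n - 1), _⟩ from
      Fin.mk_le_mk.mpr (by omega))

namespace SimpleGraph

variable {V : Type*} [Fintype V] (G : SimpleGraph V)

theorem degree_add_card_le_of_forall_not_adj (w : V) {s : Finset V}
    (hs : ∀ v ∈ s, ¬G.Adj w v) : G.degree w + #s ≤ Fintype.card V := by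
  have hdisj : Disjoint (G.neighborFinset w) s := Finset.disjoint_left.mpr fun v hv hvs =>
    hs v hvs ((G.mem_neighborFinset w v).mp hv)
  calc G.degree w + #s = #(G.neighborFinset w ∪ s) := (card_union_of_disjoint hdisj).symm
    _ ≤ Fintype.card V := card_le_univ _

theorem degree_le_degree_add_card_sub_two (u w : V) :
    G.degree w ≤ G.degree u + (Fintype.card V - 2) := by
  have hw := G.degree_lt_card_verts w
  by_cases huw : u = w
  · subst huw
    omega
  by_cases hadj : G.Adj w u
  · have := hadj.degree_pos_right
    omega
  · have := G.degree_add_card_le_of_forall_not_adj w (s := {w, u}) (by simp [hadj])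
    rw [card_pair (Ne.symm huw)] at this
    omega

theorem degree_lt_degree_add_card_sub_two {u₁ u₂ w₁ w₂ : V} (hV : 3 ≤ Fintype.card V)
    (hu : u₁ ≠ u₂) (hw : w₁ ≠ w₂) (hdu : G.degree u₁ = G.degree u₂)
    (hdw : G.degree w₁ = G.degree w₂) :
    G.degree w₁ < G.degree u₁ + (Fintype.card V - 2) := by
  refine (G.degree_le_degree_add_card_sub_two u₁ w₁).lt_of_ne fun heq => ?_
  have hw₁ := G.degree_lt_card_verts w₁
  have hne : ∀ {u w}, G.degree w = G.degree u + (Fintype.card V - 2) → u ≠ w := by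
    rintro u w h rfl
    omega
  rcases Nat.eq_zero_or_pos (G.degree u₁) with h0 | hpos
  · have hiso : ∀ {u}, G.degree u = 0 → ¬G.Adj w₁ u := fun hu hadj =>
      (hadj.degree_pos_right).ne' hu
    have := G.degree_add_card_le_of_forall_not_adj w₁ (s := {w₁, u₁, u₂})
      (by simp [hiso h0, hiso (hdu ▸ h0)])
    rw [card_insert_of_notMem (by simp [(hne heq).symm, (hne (hdu ▸ heq)).symm]),
      card_pair hu] at this
    omega
  · have hfull : ∀ {w}, G.degree w = Fintype.card V - 1 → w ≠ u₁ → G.Adj u₁ w := by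
      intro w hdeg hwu
      by_contra hadj
      have := G.degree_add_card_le_of_forall_not_adj w (s := {w, u₁})
        (by simp [G.adj_comm w u₁, hadj])
      rw [card_pair hwu] at this
      omega
    have := card_le_card (show {w₁, w₂} ⊆ G.neighborFinset u₁ by
      intro v hv
      simp only [mem_insert, mem_singleton] at hv
      rcases hv with rfl | rfl
      · exact (G.mem_neighborFinset _ _).mpr (hfull (by omega) (hne heq).symm)
      · exact (G.mem_neighborFinset _ _).mpr (hfull (by omega) (hne (hdw ▸ heq)).symm))
    rw [card_pair hw, card_neighborFinset_eq_degree] at this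
    omega

end SimpleGraph

theorem stmt_5 (n : ℕ) (hn : 3 ≤ n) (G : SimpleGraph (Fin n)) :
    (n + 1) / 2 + 1 ≤ closeCount n 2 G := by
  obtain ⟨e, he, hmono⟩ := Fin.exists_injOn_monotoneOn_comp (by omega) fun v => G.degree v
  have hmem : ∀ {k}, k < n → k ∈ Set.Iio n := id
  have hspread := G.degree_le_degree_add_card_sub_two (e 0) (e (n - 1))
  have hrepeat (h10 : G.degree (e 1) = G.degree (e 0))
      (h21 : G.degree (e (n - 1)) = G.degree (e (n - 2))) :=
    G.degree_lt_degree_add_card_sub_two (by simpa using hn)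
      (he.ne (hmem (by omega)) (hmem (by omega)) zero_ne_one)
      (he.ne (hmem (by omega)) (hmem (by omega)) (by omega)) h10.symm h21
  rw [Fintype.card_fin] at hspread hrepeat
  calc (n + 1) / 2 + 1
      ≤ #{k ∈ range (n - 1) | G.degree (e (k + 1)) ≤ G.degree (e k) + 1} +
          #{k ∈ range (n - 2) | G.degree (e (k + 2)) ≤ G.degree (e k) + 1} :=
        div_two_add_one_le_card_filter_add_card_filter (fun k => G.degree (e k)) hn hmono
          hspread hrepeat
    _ ≤ #{p ∈ range n ×ˢ range n | p.1 < p.2 ∧ G.degree (e p.2) ≤ G.degree (e p.1) + 1} :=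
        card_filter_add_card_filter_le_card_filter_lt
          (fun i j => G.degree (e j) ≤ G.degree (e i) + 1) n
    _ ≤ closeCount n 2 G := by
        unfold closeCount
        refine card_filter_lt_le_card_filter_lt_of_injOn
          (r := fun a b => |(G.degree a : ℤ) - (G.degree b : ℤ)| < ((2 : ℕ) : ℤ))
          (R := fun i j => G.degree (e j) ≤ G.degree (e i) + 1)
          (fun a b h => by rwa [abs_sub_comm]) he fun i j hij hj hclose => ?_
        have := hmono (hmem (by omega)) (hmem hj) hij.le
        simp only [Function.comp_apply] at this
        rw [abs_lt]
        omega
end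

section
/- Let n = k + t with 0 < t ≤ k. Then for any simple graph G on n vertices, the number of unordered pairs {x,y} with |deg(x) − deg(y)| < k is at least C(k+1,2) + C(t−1,2). -/
open scoped Classical

/-!
Call an ordered pair `(x, y)` far if `deg x + k ≤ deg y`. Far pairs correspond to the uncounted
unordered pairs, and `C(k+t, 2) = C(k+1, 2) + C(t-1, 2) + (k+1)(t-1)`, so it suffices to show that
there are at most `(k+1)(t-1)` far pairs. In a far pair, `x` lies in `A = {deg < t}` and `y` in
`B = {codeg < t}`, the codegree being the degree in the complement; `#A + #B ≤ k + t` as `t ≤ k`.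
Far edges are counted by the degrees in `A`, far non-edges by the codegrees in `B`, and layering
these sums gives `#far ≤ ∑_{s < t-1} (#{x ∈ A | deg x > t-2-s} + #{y ∈ B | codeg y > s})`.
If `#far > (k+1)(t-1)`, some layer has `#U + #W ≥ k+2`. No pair in `U × W` is far, so
`#far ≤ #A #B - #U #W`, which is at most `(k+1)(t-1)` under these constraints.
-/

open Finset

theorem Nat.add_choose_two (a b : ℕ) : (a + b).choose 2 = a.choose 2 + b.choose 2 + a * b := by
  induction b with
  | zero => simp
  | succ b ih =>
    rw [← add_assoc, Nat.choose_succ_succ', Nat.choose_succ_succ' b, ih, Nat.choose_one_right,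
      Nat.choose_one_right]
    ring

theorem Finset.sum_eq_sum_range_card_filter_lt {ι : Type*} (A : Finset ι) (f : ι → ℕ) {m : ℕ}
    (hf : ∀ x ∈ A, f x ≤ m) : ∑ x ∈ A, f x = ∑ s ∈ range m, #{x ∈ A | s < f x} := by
  calc ∑ x ∈ A, f x = ∑ x ∈ A, #{s ∈ range m | s < f x} := by
        refine sum_congr rfl fun x hx => ?_
        have hx' := hf x hx
        refine (card_range (f x)).symm.trans (congrArg card ?_)
        ext s
        simp only [mem_filter, mem_range]
        omega
    _ = _ := by simp only [card_filter]; exact sum_comm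

theorem Nat.mul_le_succ_mul_pred_add_mul {a b u v k t : ℕ} (htk : t ≤ k) (hu : u ≤ a) (hv : v ≤ b)
    (hab : a + b ≤ k + t) (huv : k + 2 ≤ u + v) : a * b ≤ (k + 1) * (t - 1) + u * v := by
  obtain ⟨p, rfl⟩ := Nat.exists_eq_add_of_le hu
  obtain ⟨q, rfl⟩ := Nat.exists_eq_add_of_le hv
  have hpq : p * q ≤ u * p + v * q := by
    rcases le_total p v with h | h
    · nlinarith
    · have : q ≤ u := by omega
      nlinarith
  have hSm : (u + v) * (p + q) ≤ (k + 1) * (t - 1) := by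
    obtain ⟨r, rfl⟩ : ∃ r, t = r + 1 := ⟨t - 1, by omega⟩
    simp only [Nat.add_sub_cancel]
    nlinarith
  nlinarith

theorem card_le_succ_mul_pred_of_card_le_sum {α β : Type*} {F : Finset (α × β)} {A : Finset α}
    {B : Finset β} {f : α → ℕ} {g : β → ℕ} {k t : ℕ} (htk : t ≤ k) (hFAB : F ⊆ A ×ˢ B)
    (hF : ∀ p ∈ F, f p.1 + g p.2 < t) (hA : ∀ x ∈ A, f x < t) (hB : ∀ y ∈ B, g y < t)
    (hAB : #A + #B ≤ k + t) (hFsum : #F ≤ ∑ x ∈ A, f x + ∑ y ∈ B, g y) :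
    #F ≤ (k + 1) * (t - 1) := by
  by_contra! hlarge
  let U : ℕ → Finset α := fun s => {x ∈ A | t - 2 - s < f x}
  let W : ℕ → Finset β := fun s => {y ∈ B | s < g y}
  have hUA (s : ℕ) : U s ⊆ A := filter_subset _ _
  have hWB (s : ℕ) : W s ⊆ B := filter_subset _ _
  have hlevels : ∑ x ∈ A, f x + ∑ y ∈ B, g y = ∑ s ∈ range (t - 1), (#(U s) + #(W s)) := by
    rw [sum_eq_sum_range_card_filter_lt A f (m := t - 1) (fun x hx => by have := hA x hx; omega),
      sum_eq_sum_range_card_filter_lt B g (m := t - 1) (fun y hy => by have := hB y hy; omega),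
      ← sum_range_reflect, ← sum_add_distrib]
    refine sum_congr rfl fun s _ => ?_
    simp only [U, W, show t - 1 - 1 - s = t - 2 - s by omega]
  obtain ⟨s, hs, hUW⟩ : ∃ s ∈ range (t - 1), k + 1 < #(U s) + #(W s) := by
    refine exists_lt_of_sum_lt ?_
    rw [sum_const, card_range, smul_eq_mul, mul_comm]
    omega
  have hFsub : F ⊆ A ×ˢ B \ U s ×ˢ W s := by
    intro p hp
    refine mem_sdiff.2 ⟨hFAB hp, fun hUW => ?_⟩
    simp only [mem_product, U, W, mem_filter, mem_range] at hUW hs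
    have := hF p hp
    omega
  have hrect : #F + #(U s) * #(W s) ≤ #A * #B := by
    have := card_le_card hFsub
    rw [card_sdiff_of_subset (product_subset_product (hUA s) (hWB s)), card_product,
      card_product] at this
    have := Nat.mul_le_mul (card_le_card (hUA s)) (card_le_card (hWB s))
    omega
  have := Nat.mul_le_succ_mul_pred_add_mul htk (card_le_card (hUA s)) (card_le_card (hWB s)) hAB
    (show k + 2 ≤ #(U s) + #(W s) by omega)
  omega

theorem card_filter_lt_not_abs_sub_lt {V : Type*} [Fintype V] [LinearOrder V] (d : V → ℕ) {k : ℕ}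
    (hk : 0 < k) :
    #{p : V × V | p.1 < p.2 ∧ ¬ |(d p.1 : ℤ) - d p.2| < k} = #{p : V × V | d p.1 + k ≤ d p.2} := by
  refine card_nbij' (fun p => if d p.1 ≤ d p.2 then p else p.swap)
    (fun p => if p.1 < p.2 then p else p.swap) ?_ ?_ ?_ ?_ <;>
  · rintro ⟨x, y⟩ hp
    simp only [coe_filter, mem_univ, true_and, Set.mem_ofPred_eq, abs_lt, not_and_or,
      not_lt] at hp ⊢
    rcases lt_trichotomy x y with h | rfl | h <;> split_ifs <;>
      simp_all [Prod.swap, lt_asymm] <;> omega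

theorem closeCount_add_card_degree_add_le {n k : ℕ} (G : SimpleGraph (Fin n)) (hk : 0 < k) :
    closeCount n k G + #{p : Fin n × Fin n | G.degree p.1 + k ≤ G.degree p.2} =
      n.choose 2 := by
  rw [closeCount, ← card_filter_lt_not_abs_sub_lt (fun v => G.degree v) hk, ← filter_filter,
    ← filter_filter, card_filter_add_card_filter_not, Fintype.card_product_filter_lt,
    Fintype.card_fin]

namespace SimpleGraph

variable {V : Type*} [Fintype V] (G : SimpleGraph V)

theorem card_adj_fst_mem (A : Finset V) :
    #{p : V × V | p.1 ∈ A ∧ G.Adj p.1 p.2} = ∑ x ∈ A, G.degree x := by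
  simp only [card_filter, Fintype.sum_prod_type, ite_and, sum_ite_irrel, sum_const_zero,
    sum_ite_mem_eq, ← G.card_neighborFinset_eq_degree, G.neighborFinset_eq_filter]

theorem card_adj_snd_mem (B : Finset V) :
    #{p : V × V | p.2 ∈ B ∧ G.Adj p.2 p.1} = ∑ y ∈ B, G.degree y := by
  simp only [card_filter, Fintype.sum_prod_type_right, ite_and, sum_ite_irrel, sum_const_zero,
    sum_ite_mem_eq, ← G.card_neighborFinset_eq_degree, G.neighborFinset_eq_filter]

theorem card_degree_add_le_degree_le {k t : ℕ} (hV : Fintype.card V = k + t)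
    (htk : t ≤ k) : #{p : V × V | G.degree p.1 + k ≤ G.degree p.2} ≤ (k + 1) * (t - 1) := by
  let A : Finset V := {x | G.degree x < t}
  let B : Finset V := {y | Gᶜ.degree y < t}
  have hdeg (v : V) : G.degree v < k + t := hV ▸ G.degree_lt_card_verts v
  have hdegc (v : V) : Gᶜ.degree v = k + t - 1 - G.degree v := hV ▸ G.degree_compl v
  refine card_le_succ_mul_pred_of_card_le_sum (A := A) (B := B) (f := fun v => G.degree v)
    (g := fun v => Gᶜ.degree v) htk ?_ ?_ ?_ ?_ ?_ ?_
  · intro p hp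
    simp only [A, B, mem_product, mem_filter, mem_univ, true_and, hdegc] at hp ⊢
    have := hdeg p.2
    omega
  · intro p hp
    simp only [mem_filter, mem_univ, true_and, hdegc] at hp ⊢
    have := hdeg p.2
    omega
  · exact fun x hx => (mem_filter.1 hx).2
  · exact fun y hy => (mem_filter.1 hy).2
  · have hAB : Disjoint A B := disjoint_filter.2 fun v _ hA hB => by
      rw [hdegc] at hB
      omega
    rw [← card_union_of_disjoint hAB, ← hV]
    exact card_le_univ _
  · let E : Finset (V × V) := {p | p.1 ∈ A ∧ G.Adj p.1 p.2}
    let N : Finset (V × V) := {p | p.2 ∈ B ∧ Gᶜ.Adj p.2 p.1}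
    have hcover : ({p | G.degree p.1 + k ≤ G.degree p.2} : Finset (V × V)) ⊆ E ∪ N := by
      intro p hp
      simp only [E, N, A, B, mem_union, mem_filter, mem_univ, true_and, hdegc, compl_adj] at hp ⊢
      have := hdeg p.2
      by_cases hadj : G.Adj p.1 p.2
      · exact .inl ⟨by omega, hadj⟩
      · have hne : p.2 ≠ p.1 := fun h => by rw [h] at hp; omega
        exact .inr ⟨by omega, hne, fun h => hadj h.symm⟩
    calc _ ≤ #(E ∪ N) := card_le_card hcover
      _ ≤ #E + #N := card_union_le E N
      _ = _ := by convert congrArg₂ (· + ·) (G.card_adj_fst_mem A) (Gᶜ.card_adj_snd_mem B)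

end SimpleGraph

theorem stmt_6 (n k t : ℕ) (ht : 0 < t) (htk : t ≤ k) (hn : n = k + t)
    (G : SimpleGraph (Fin n)) :
    Nat.choose (k + 1) 2 + Nat.choose (t - 1) 2 ≤ closeCount n k G := by
  subst hn
  have hsplit := closeCount_add_card_degree_add_le G (ht.trans_le htk)
  have hfar := G.card_degree_add_le_degree_le (Fintype.card_fin _) htk
  have hchoose : (k + t).choose 2 = (k + 1).choose 2 + (t - 1).choose 2 + (k + 1) * (t - 1) := by
    rw [← Nat.add_choose_two, show k + 1 + (t - 1) = k + t by omega]
  omega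
end

section
/- Suppose k divides n, n > k ≥ 1. Then for any simple graph G on n vertices, the number of unordered pairs {x,y} with |deg(x) − deg(y)| < k is at least (n/k)·C(k,2) + 1. -/
/-!
Sort the vertices into the classes `⌊deg v / k⌋`; since degrees are `< n` there are `m = n / k`
classes, and two vertices of the same class have degrees differing by less than `k`. The
same-class pairs number `∑ C(c_b, 2)` with `∑ c_b = n`, which by convexity exceeds `m · C(k, 2)`
unless every class has exactly `k` vertices. In that balanced case some pair from different
classes still has close degrees: otherwise consecutive classes are separated by degree gaps of at
least `k`, so if `A` is the largest degree in the lowest class, every vertex of the top class has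
degree at least `A + (m - 1) k = n - k + A` and is therefore adjacent to at least `A + 1` of the
`k` vertices of the lowest class, each of which has at most `A` neighbours. Double counting the
edges between the two classes gives `k (A + 1) ≤ k A`.
-/

open scoped Classical

open Finset

theorem Finset.two_le_sum_sq_of_sum_eq_zero {ι : Type*} {s : Finset ι} {g : ι → ℤ}
    (hsum : ∑ i ∈ s, g i = 0) {i : ι} (hi : i ∈ s) (hgi : g i ≠ 0) :
    2 ≤ ∑ j ∈ s, g j ^ 2 := by
  obtain ⟨j, hj, hji, hgj⟩ : ∃ j ∈ s, j ≠ i ∧ g j ≠ 0 := by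
    by_contra! h
    exact hgi (by rwa [sum_eq_single_of_mem i hi h] at hsum)
  have hpair : ∑ l ∈ {i, j}, g l ^ 2 ≤ ∑ l ∈ s, g l ^ 2 :=
    sum_le_sum_of_subset_of_nonneg (by simp [insert_subset_iff, hi, hj]) fun _ _ _ => sq_nonneg _
  rw [sum_pair hji.symm] at hpair
  have hi1 : 1 ≤ g i ^ 2 := (one_le_sq_iff_one_le_abs _).2 (Int.one_le_abs hgi)
  have hj1 : 1 ≤ g j ^ 2 := (one_le_sq_iff_one_le_abs _).2 (Int.one_le_abs hgj)
  linarith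

theorem Nat.cast_choose_two_mul_two (c : ℕ) : ((c.choose 2 : ℕ) : ℤ) * 2 = c * c - c := by
  induction c with
  | zero => simp
  | succ c ih => rw [Nat.choose_succ_succ', Nat.choose_one_right]; push_cast; linarith

theorem Finset.card_mul_choose_two_lt_sum_choose_two {ι : Type*} {s : Finset ι} {f : ι → ℕ}
    {k : ℕ} (hsum : ∑ i ∈ s, f i = #s * k) {i : ι} (hi : i ∈ s) (hfi : f i ≠ k) :
    #s * k.choose 2 < ∑ j ∈ s, (f j).choose 2 := by
  have hdev : ∑ j ∈ s, ((f j : ℤ) - k) = 0 := by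
    rw [sum_sub_distrib, ← Nat.cast_sum, hsum, sum_const, nsmul_eq_mul, Nat.cast_mul, sub_self]
  have hsq := two_le_sum_sq_of_sum_eq_zero hdev hi (sub_ne_zero.2 (Nat.cast_injective.ne hfi))
  have hterm : ∀ j, ((f j).choose 2 : ℤ) * 2 =
      ((f j : ℤ) - k) ^ 2 + (2 * k - 1) * ((f j : ℤ) - k) + (k.choose 2 : ℤ) * 2 := fun j => by
    rw [Nat.cast_choose_two_mul_two, Nat.cast_choose_two_mul_two]; ring
  have hexpand : (∑ j ∈ s, ((f j).choose 2 : ℤ)) * 2 =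
      ∑ j ∈ s, ((f j : ℤ) - k) ^ 2 + (2 * k - 1) * ∑ j ∈ s, ((f j : ℤ) - k)
        + #s * (k.choose 2 : ℤ) * 2 := by
    simp only [sum_mul, hterm, sum_add_distrib, ← mul_sum, sum_const, nsmul_eq_mul]
    ring
  rw [hdev] at hexpand
  exact_mod_cast (by linarith : (#s * k.choose 2 : ℤ) < ∑ j ∈ s, ((f j).choose 2 : ℤ))

theorem Nat.abs_sub_lt_of_div_eq {k x y : ℕ} (hk : 0 < k) (h : x / k = y / k) :
    |(x : ℤ) - y| < k := by
  have hx := Nat.div_add_mod x k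
  have hy := Nat.div_add_mod y k
  have := Nat.mod_lt x hk
  have := Nat.mod_lt y hk
  rw [h] at hx
  generalize k * (y / k) = q at hx hy
  rw [abs_lt]
  omega

theorem Finset.card_filter_lt_and_eq_eq_sum_choose_two {α β : Type*} [Fintype α] [LinearOrder α]
    [DecidableEq β] (B : α → β) {t : Finset β} (hB : ∀ x, B x ∈ t) :
    #{p : α × α | p.1 < p.2 ∧ B p.1 = B p.2} = ∑ b ∈ t, (#{x | B x = b}).choose 2 := by
  rw [card_eq_sum_card_fiberwise (f := fun p => B p.1) fun p _ => hB p.1]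
  refine sum_congr rfl fun b _ => ?_
  rw [← card_product_filter_lt]
  congr 1
  ext p
  simp only [mem_filter, mem_univ, true_and, mem_product]
  constructor
  · rintro ⟨⟨hlt, he⟩, rfl⟩; exact ⟨⟨rfl, he.symm⟩, hlt⟩
  · rintro ⟨⟨h1, h2⟩, hlt⟩; exact ⟨⟨hlt, h1.trans h2.symm⟩, h1⟩

theorem add_mul_le_of_separated {V : Type*} (d B : V → ℕ) (k : ℕ)
    (hsep : ∀ x y, B y < B x → d y + k ≤ d x) (hdown : ∀ x, ∀ t < B x, ∃ y, B y = t)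
    {u : V} (hu : B u = 0) {x : V} (hx : 0 < B x) : d u + B x * k ≤ d x := by
  obtain ⟨t, ht⟩ : ∃ t, B x = t + 1 := ⟨B x - 1, by omega⟩
  induction t generalizing x with
  | zero => simpa [ht] using hsep x u (by omega)
  | succ t ih =>
    obtain ⟨y, hy⟩ := hdown x (t + 1) (by omega)
    have hy' := ih (x := y) (by omega) hy
    have hxy := hsep x y (by omega)
    rw [ht, hy] at *
    linarith

namespace SimpleGraph

variable {V : Type*} [Fintype V] [DecidableEq V] (G : SimpleGraph V) [DecidableRel G.Adj]

theorem card_filter_not_adj_add_degree_lt {L : Finset V} {v : V} (hv : v ∉ L) :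
    #{w ∈ L | ¬G.Adj v w} + G.degree v < Fintype.card V := by
  have hsub : {w ∈ L | ¬G.Adj v w} ⊆ Gᶜ.neighborFinset v := fun w hw => by
    rw [mem_filter] at hw
    rw [mem_neighborFinset, compl_adj]
    exact ⟨fun h => hv (h ▸ hw.1), hw.2⟩
  have := card_le_card hsub
  rw [card_neighborFinset_eq_degree, degree_compl] at this
  have := G.degree_lt_card_verts v
  omega

theorem card_mul_succ_le_card_mul_of_degree_bounds {L T : Finset V} (hLT : Disjoint L T) {A : ℕ}
    (hL : ∀ w ∈ L, G.degree w ≤ A) (hT : ∀ v ∈ T, Fintype.card V + A ≤ G.degree v + #L) :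
    #T * (A + 1) ≤ #L * A := by
  refine card_mul_le_card_mul G.Adj (fun v hv => ?_) fun w hw => ?_
  · have hsplit := card_filter_add_card_filter_not (s := L) (fun w => G.Adj v w)
    have := G.card_filter_not_adj_add_degree_lt (disjoint_right.1 hLT hv)
    have := hT v hv
    rw [bipartiteAbove]
    omega
  · calc #(bipartiteBelow G.Adj T w) ≤ #(G.neighborFinset w) :=
          card_le_card fun v hv => by
            rw [mem_bipartiteBelow] at hv
            exact (G.mem_neighborFinset w v).2 hv.2.symm
      _ ≤ A := (G.card_neighborFinset_eq_degree w).trans_le (hL w hw)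

theorem exists_close_degrees_of_card_fiber_eq {k m : ℕ} (hk : 0 < k) (hm : 2 ≤ m)
    (hV : Fintype.card V = m * k) (hfib : ∀ b < m, #{v | G.degree v / k = b} = k) :
    ∃ u v, G.degree u / k ≠ G.degree v / k ∧ |(G.degree u : ℤ) - G.degree v| < k := by
  by_contra! hfar
  have hlt : ∀ v, G.degree v / k < m := fun v =>
    Nat.div_lt_of_lt_mul (by have := G.degree_lt_card_verts v; rw [hV] at this; linarith)
  have hne : ∀ b < m, ({v | G.degree v / k = b} : Finset V).Nonempty := fun b hb =>
    card_pos.1 (by rw [hfib b hb]; exact hk)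
  have hsep : ∀ x y, G.degree y / k < G.degree x / k → G.degree y + k ≤ G.degree x :=
    fun x y hxy => by
      have hyx := Nat.lt_of_div_lt_div hxy
      have := hfar x y hxy.ne'
      rw [abs_of_pos (by omega)] at this
      omega
  have hdown : ∀ x, ∀ t < G.degree x / k, ∃ y, G.degree y / k = t := fun x t ht => by
    obtain ⟨y, hy⟩ := hne t (ht.trans (hlt x))
    exact ⟨y, (mem_filter.1 hy).2⟩
  obtain ⟨u, hu, hmax⟩ := exists_max_image _ (fun v => G.degree v) (hne 0 (by omega))
  rw [mem_filter] at hu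
  have hT : ∀ v ∈ ({v | G.degree v / k = m - 1} : Finset V),
      Fintype.card V + G.degree u ≤ G.degree v + #{v | G.degree v / k = 0} := fun v hv => by
    rw [mem_filter] at hv
    have := add_mul_le_of_separated (fun v => G.degree v) (fun v => G.degree v / k) k hsep hdown
      hu.2 (x := v) (by omega)
    simp only [hv.2] at this
    have hmk : (m - 1) * k + k = m * k := by
      rw [Nat.sub_one_mul, Nat.sub_add_cancel (Nat.le_mul_of_pos_left k (by omega))]
    rw [hfib 0 (by omega), hV]
    omega
  have hLT : Disjoint ({v | G.degree v / k = 0} : Finset V)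
      ({v | G.degree v / k = m - 1} : Finset V) :=
    disjoint_filter.2 fun _ _ h0 h1 => by omega
  have := G.card_mul_succ_le_card_mul_of_degree_bounds hLT (A := G.degree u) hmax hT
  rw [hfib 0 (by omega), hfib (m - 1) (by omega)] at this
  have := Nat.le_of_mul_le_mul_left this hk
  omega

end SimpleGraph

theorem stmt_7 (n k : ℕ) (hk : 1 ≤ k) (hnk : k < n) (hdvd : k ∣ n)
    (G : SimpleGraph (Fin n)) :
    (n / k) * Nat.choose k 2 + 1 ≤ closeCount n k G := by
  obtain ⟨m, rfl⟩ := hdvd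
  have hm : 2 ≤ m := by nlinarith
  have hV : Fintype.card (Fin (k * m)) = m * k := by rw [Fintype.card_fin, mul_comm]
  have hclass : ∀ v, G.degree v / k ∈ range m := fun v =>
    mem_range.2 (Nat.div_lt_of_lt_mul (by simpa using G.degree_lt_card_verts v))
  have hsum : ∑ b ∈ range m, #{v | G.degree v / k = b} = #(range m) * k := by
    rw [← card_eq_sum_card_fiberwise fun v _ => hclass v, card_univ, card_range, hV]
  have hsame := card_filter_lt_and_eq_eq_sum_choose_two (fun v => G.degree v / k) hclass
  have hsub : ({p | p.1 < p.2 ∧ G.degree p.1 / k = G.degree p.2 / k} : Finset (Fin (k * m) × _))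
      ⊆ ({p | p.1 < p.2 ∧ |(G.degree p.1 : ℤ) - G.degree p.2| < k} : Finset (Fin (k * m) × _)) :=
    fun p hp => by
      simp only [mem_filter, mem_univ, true_and] at hp ⊢
      exact ⟨hp.1, Nat.abs_sub_lt_of_div_eq hk hp.2⟩
  rw [Nat.mul_div_cancel_left m hk, Nat.add_one_le_iff, closeCount]
  by_cases huniform : ∀ b ∈ range m, #{v | G.degree v / k = b} = k
  · obtain ⟨u, v, hclass_ne, hclose⟩ := G.exists_close_degrees_of_card_fiber_eq hk hm hV
      fun b hb => huniform b (mem_range.2 hb)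
    rw [sum_congr rfl fun b hb => by rw [huniform b hb], sum_const, card_range,
      smul_eq_mul] at hsame
    rw [← hsame]
    refine card_lt_card ((ssubset_iff_of_subset hsub).2 ?_)
    rcases lt_or_gt_of_ne (fun h : u = v => hclass_ne (h ▸ rfl)) with huv | hvu
    · exact ⟨(u, v), by simp [huv, hclose], by simp [hclass_ne]⟩
    · exact ⟨(v, u), by simp [hvu, abs_sub_comm, hclose], by simp [Ne.symm hclass_ne]⟩
  · obtain ⟨b, hb, hbk⟩ := not_forall₂.1 huniform
    calc m * k.choose 2 = #(range m) * k.choose 2 := by rw [card_range]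
      _ < _ := card_mul_choose_two_lt_sum_choose_two hsum hb hbk
      _ = _ := hsame.symm
      _ ≤ _ := card_le_card hsub
end

section
/- Let G be a simple graph on n = ki + t vertices (1 ≤ t ≤ k, i ≥ 1), and partition {0,1,...,n−1} into i+1 intervals each of size at most k. If for the induced partition of vertices by degree, the number x_j of vertices with degree in the j-th interval satisfies min_j x_j ≤ t − 1, then the number of unordered pairs of vertices lying in the same interval-group, ∑_j C(x_j, 2), is at least f0(n,k) = C(t−1,2) + C(k+1,2) + (i−1)·C(k,2). -/
lemma two_mul_choose_two' (m : ℕ) : 2 * m.choose 2 = m * (m - 1) := by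
  rw [Nat.choose_two_right]
  cases m with
  | zero => rfl
  | succ n =>
    simp only [Nat.succ_sub_one]
    have h : 2 ∣ (n + 1) * n := by
      rcases Nat.even_or_odd n with h | h
      · exact Dvd.dvd.mul_left h.two_dvd _
      · exact Dvd.dvd.mul_right (Odd.add_one h).two_dvd _
    rw [Nat.mul_div_cancel' h]

lemma cast_choose_two (m : ℕ) : (2 * (m.choose 2) : ℤ) = (m : ℤ) ^ 2 - m := by
  have h := congrArg (fun n : ℕ => (n : ℤ)) (two_mul_choose_two' m)
  push_cast at h
  rw [h]
  cases m with
  | zero => simp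
  | succ n => push_cast [Nat.succ_sub_one]; ring

set_option maxHeartbeats 1000000 in
theorem stmt_8 (k t i : ℕ) (hi : 1 ≤ i) (ht : 1 ≤ t) (htk : t ≤ k)
    (x : Fin (i + 1) → ℕ)
    (hsum : ∑ j, x j = k * i + t)
    (hmin : ∃ j, x j ≤ t - 1) :
    Nat.choose (t - 1) 2 + Nat.choose (k + 1) 2 + (i - 1) * Nat.choose k 2 ≤
      ∑ j, Nat.choose (x j) 2 := by
  obtain ⟨j0, hj0⟩ := hmin
  refine Nat.le_of_mul_le_mul_left ?_ (show 0 < 2 by norm_num)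
  set e : Finset (Fin (i + 1)) := Finset.univ.erase j0 with he
  have hcard : (e.card : ℤ) = i := by
    simp [he, Finset.card_erase_of_mem, Finset.card_univ]
  set S : ℤ := ∑ j ∈ e, (x j : ℤ) with hS
  set Q : ℤ := ∑ j ∈ e, (x j : ℤ) ^ 2 with hQ
  set s : ℤ := (x j0 : ℤ) with hs
  have hCS : S ^ 2 ≤ i * Q := by
    have h := sq_sum_le_card_mul_sum_sq (s := e) (f := fun j => (x j : ℤ))
    rwa [hcard] at h
  have hsum' : s + S = (k : ℤ) * i + t := by
    have h1 : x j0 + ∑ j ∈ e, x j = ∑ j, x j := Finset.add_sum_erase _ _ (Finset.mem_univ j0)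
    rw [hsum] at h1
    have h2 := congrArg (fun n : ℕ => (n : ℤ)) h1
    push_cast at h2
    simpa [hS, hs] using h2
  have hsum2 : ∑ j ∈ e, (2 * ((x j).choose 2) : ℤ) = Q - S := by
    rw [hQ, hS, ← Finset.sum_sub_distrib]
    exact Finset.sum_congr rfl fun j _ => cast_choose_two (x j)
  have hdecomp : ∑ j, (2 * ((x j).choose 2) : ℤ) = 2 * ((x j0).choose 2) + (Q - S) := by
    rw [← hsum2]
    exact (Finset.add_sum_erase _ _ (Finset.mem_univ j0)).symm
  have hti : ((t - 1 : ℕ) : ℤ) = (t : ℤ) - 1 := by omega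
  have hii : ((i - 1 : ℕ) : ℤ) = (i : ℤ) - 1 := by omega
  have hxj0 : s ≤ (t : ℤ) - 1 := by
    have : (x j0 : ℤ) ≤ ((t - 1 : ℕ) : ℤ) := by exact_mod_cast hj0
    omega
  have hs0 : (0 : ℤ) ≤ s := by positivity
  have htk' : (t : ℤ) ≤ k := by exact_mod_cast htk
  have hi' : (1 : ℤ) ≤ i := by exact_mod_cast hi
  have e1 : (2 * ((t - 1).choose 2) : ℤ) = ((t : ℤ) - 1) ^ 2 - ((t : ℤ) - 1) := by
    rw [cast_choose_two, hti]
  have e4 : (2 * ((x j0).choose 2) : ℤ) = s ^ 2 - s := cast_choose_two (x j0)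
  -- key arithmetic
  set B : ℤ := (((t : ℤ) - 1) ^ 2 - ((t : ℤ) - 1)) + ((k : ℤ) + 1) ^ 2 - ((k : ℤ) + 1) +
      ((i : ℤ) - 1) * ((k : ℤ) ^ 2 - k) - (s ^ 2 - s) with hB
  have hSk : S = (k : ℤ) * i + ((t : ℤ) - s) := by linarith
  have key : (i : ℤ) * B - i + 1 ≤ S ^ 2 - i * S := by
    have hd1 : (1 : ℤ) ≤ (t : ℤ) - s := by linarith
    have hks : (t : ℤ) - s ≤ (k : ℤ) - s := by linarith
    have hnn : (0 : ℤ) ≤ (i : ℤ) * ((t : ℤ) - s) :=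
      mul_nonneg (by linarith) (by linarith)
    have hmul : (i : ℤ) * ((t : ℤ) - s) ≤ (i : ℤ) * ((k : ℤ) - s) :=
      mul_le_mul_of_nonneg_left hks (by linarith)
    have hdist : (i : ℤ) * (((t : ℤ) - s) - 1) = (i : ℤ) * ((t : ℤ) - s) - i := by ring
    have hbr : (0 : ℤ) ≤ 2 * ((i : ℤ) * ((k : ℤ) - s)) - (i : ℤ) * (((t : ℤ) - s) - 1)
        + (((t : ℤ) - s) + 1) := by linarith
    have hprod : (0 : ℤ) ≤ (((t : ℤ) - s) - 1) *
        (2 * ((i : ℤ) * ((k : ℤ) - s)) - (i : ℤ) * (((t : ℤ) - s) - 1) + (((t : ℤ) - s) + 1)) :=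
      mul_nonneg (by linarith) hbr
    have hfac : S ^ 2 - (i : ℤ) * S - (i : ℤ) * B + i - 1 = (((t : ℤ) - s) - 1) *
        (2 * ((i : ℤ) * ((k : ℤ) - s)) - (i : ℤ) * (((t : ℤ) - s) - 1) + (((t : ℤ) - s) + 1)) := by
      rw [hSk, hB]; ring
    linarith [hfac, hprod]
  have hQS : B ≤ Q - S := by
    by_contra hcon
    push_neg at hcon
    have h1 : Q - S ≤ B - 1 := by omega
    have h2 : (i : ℤ) * (Q - S) ≤ (i : ℤ) * (B - 1) :=
      mul_le_mul_of_nonneg_left h1 (by linarith)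
    have h3 : (i : ℤ) * (Q - S) = (i : ℤ) * Q - (i : ℤ) * S := by ring
    have h4 : (i : ℤ) * (B - 1) = (i : ℤ) * B - i := by ring
    linarith [hCS, key]
  -- assemble
  have hL : ((2 * (Nat.choose (t - 1) 2 + Nat.choose (k + 1) 2 + (i - 1) * Nat.choose k 2) : ℕ) : ℤ)
      = (((t : ℤ) - 1) ^ 2 - ((t : ℤ) - 1)) + (((k : ℤ) + 1) ^ 2 - ((k : ℤ) + 1)) +
        ((i : ℤ) - 1) * ((k : ℤ) ^ 2 - k) := by
    have hn : 2 * (Nat.choose (t - 1) 2 + Nat.choose (k + 1) 2 + (i - 1) * Nat.choose k 2)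
        = 2 * Nat.choose (t - 1) 2 + 2 * Nat.choose (k + 1) 2 + (i - 1) * (2 * Nat.choose k 2) := by
      ring
    rw [hn]
    push_cast [hii]
    rw [show ((2:ℤ) * ((t-1 : ℕ).choose 2) : ℤ) = (2 * ((t-1 : ℕ).choose 2) : ℤ) by ring]
    rw [e1]
    rw [show ((2:ℤ) * (((k:ℕ)+1).choose 2) : ℤ) = (2 * (((k:ℕ)+1).choose 2) : ℤ) by ring]
    rw [cast_choose_two (k+1)]
    rw [show ((2:ℤ) * ((k:ℕ).choose 2) : ℤ) = (2 * ((k:ℕ).choose 2) : ℤ) by ring]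
    rw [cast_choose_two k]
    push_cast
    ring
  have hR : ((2 * ∑ j, Nat.choose (x j) 2 : ℕ) : ℤ) = (s ^ 2 - s) + (Q - S) := by
    push_cast
    rw [Finset.mul_sum]
    rw [show (∑ j, 2 * (((x j).choose 2 : ℕ) : ℤ)) = ∑ j, (2 * ((x j).choose 2) : ℤ) by
      rfl]
    rw [hdecomp, e4]
  have hZ : ((2 * (Nat.choose (t - 1) 2 + Nat.choose (k + 1) 2 + (i - 1) * Nat.choose k 2) : ℕ) : ℤ)
      ≤ ((2 * ∑ j, Nat.choose (x j) 2 : ℕ) : ℤ) := by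
    rw [hL, hR]
    linarith [hQS]
  exact_mod_cast hZ
end

section
/- Let i ≥ 2 be a natural number and a_1,...,a_i, b_0,...,b_{i−1} nonnegative reals; set a_0 = b_i = 0. Then ∑_{j=0}^{i−1} b_j·a_{j+1} ≥ min over 0 ≤ j ≤ i−1 of (b_j + a_j)(b_{j+1} + a_{j+1}). -/
theorem stmt_9 (i : ℕ) (hi : 2 ≤ i) (a b : ℕ → ℝ)
    (ha : ∀ j ≤ i, 0 ≤ a j) (hb : ∀ j ≤ i, 0 ≤ b j)
    (ha0 : a 0 = 0) (hbi : b i = 0) :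
    (Finset.range i).inf' (by simp; omega)
        (fun j => (b j + a j) * (b (j + 1) + a (j + 1))) ≤
      ∑ j ∈ Finset.range i, b j * a (j + 1) := by
  set m := (Finset.range i).inf' (by simp; omega)
      (fun j => (b j + a j) * (b (j + 1) + a (j + 1))) with hm
  have hmle : ∀ j, j < i → m ≤ (b j + a j) * (b (j + 1) + a (j + 1)) := by
    intro j hj
    exact Finset.inf'_le _ (Finset.mem_range.mpr hj)
  have key : ∀ j, j + 1 ≤ i →
      m ≤ (∑ t ∈ Finset.range j, b t * a (t + 1)) + b j * (a (j + 1) + b (j + 1)) := by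
    intro j
    induction j with
    | zero =>
      intro h
      have h0 := hmle 0 (by omega)
      rw [ha0] at h0
      simp only [Finset.range_zero, Finset.sum_empty, zero_add]
      calc m ≤ (b 0 + 0) * (b (0 + 1) + a (0 + 1)) := h0
        _ = b 0 * (a (0 + 1) + b (0 + 1)) := by ring
    | succ j ih =>
      intro h
      have hIH := ih (by omega)
      have hS : 0 ≤ ∑ t ∈ Finset.range j, b t * a (t + 1) := by
        apply Finset.sum_nonneg
        intro t ht
        have ht' := Finset.mem_range.mp ht
        exact mul_nonneg (hb t (by omega)) (ha (t + 1) (by omega))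
      have hsum : ∑ t ∈ Finset.range (j + 1), b t * a (t + 1)
          = (∑ t ∈ Finset.range j, b t * a (t + 1)) + b j * a (j + 1) :=
        Finset.sum_range_succ _ _
      rw [hsum]
      have hbj : 0 ≤ b j := hb j (by omega)
      have hbj1 : 0 ≤ b (j + 1) := hb (j + 1) (by omega)
      have haj1 : 0 ≤ a (j + 1) := ha (j + 1) (by omega)
      have haj2 : 0 ≤ a (j + 2) := ha (j + 2) (by omega)
      have hbj2 : 0 ≤ b (j + 2) := hb (j + 2) (by omega)
      rcases le_total (b j) (a (j + 2) + b (j + 2)) with hc | hc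
      · -- b j * b (j+1) ≤ (a(j+2)+b(j+2)) * b(j+1)
        nlinarith [mul_le_mul_of_nonneg_right hc hbj1]
      · -- use m ≤ (b(j+1)+a(j+1))*(b(j+2)+a(j+2))
        have := hmle (j + 1) (by omega)
        nlinarith [mul_le_mul_of_nonneg_right hc haj1]
  have hfin := key (i - 1) (by omega)
  have hi1 : i - 1 + 1 = i := by omega
  rw [hi1] at hfin
  have hsum : ∑ t ∈ Finset.range i, b t * a (t + 1)
      = (∑ t ∈ Finset.range (i - 1), b t * a (t + 1)) + b (i - 1) * a (i - 1 + 1) := by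
    rw [← Finset.sum_range_succ]
    rw [hi1]
  rw [hsum, hi1]
  calc m ≤ (∑ t ∈ Finset.range (i - 1), b t * a (t + 1)) + b (i - 1) * (a i + b i) := hfin
    _ = _ := by rw [hbi]; ring
end

section
/- Let m be a natural number, x_1,...,x_m integers, and θ a convex function on the integer interval [min x_i, max x_i] (i.e., θ(x) − θ(x−1) is nondecreasing). If integers A, B, k satisfy A + B = m and A·k + B·(k+1) = ∑ x_i, then ∑ θ(x_i) ≥ A·θ(k) + B·θ(k+1). -/
/-!
Convexity makes the increments `θ y - θ (y - 1)` nondecreasing, so the line through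
`(k, θ k)` and `(k + 1, θ (k + 1))` supports `θ` at every integer of the interval. Summing this
bound over the `x j` and using `∑ (x j - k) = B` turns the right-hand side into
`m θ k + B (θ (k + 1) - θ k) = A θ k + B θ (k + 1)`.
-/

open Finset

def DiscreteConvexOn (θ : ℤ → ℝ) (a b : ℤ) : Prop :=
  ∀ y : ℤ, a ≤ y - 1 → y + 1 ≤ b → θ y - θ (y - 1) ≤ θ (y + 1) - θ y

namespace DiscreteConvexOn

variable {θ : ℤ → ℝ} {a b : ℤ}

theorem monotoneOn_sub_sub_one (h : DiscreteConvexOn θ a b) :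
    MonotoneOn (fun y => θ y - θ (y - 1)) (Set.Icc (a + 1) b) :=
  monotoneOn_of_le_add_one Set.ordConnected_Icc fun y _ hy hy1 => by
    simpa using h y (by linarith [hy.1]) hy1.2

theorem add_mul_sub_le (h : DiscreteConvexOn θ a b) {k z : ℤ} (hak : a ≤ k) (hkb : k + 1 ≤ b)
    (haz : a ≤ z) (hzb : z ≤ b) :
    θ k + ((z - k : ℤ) : ℝ) * (θ (k + 1) - θ k) ≤ θ z := by
  have hslope {i j : ℤ} (hi : a + 1 ≤ i) (hij : i ≤ j) (hj : j ≤ b) :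
      θ i - θ (i - 1) ≤ θ j - θ (j - 1) :=
    h.monotoneOn_sub_sub_one ⟨hi, hij.trans hj⟩ ⟨hi.trans hij, hj⟩ hij
  rcases le_total k z with hkz | hzk
  · induction z, hkz using Int.leInduction with
    | base => simp
    | succ z hkz ih =>
      have := hslope (i := k + 1) (j := z + 1) (by linarith) (by linarith) hzb
      simp only [add_sub_cancel_right] at this
      push_cast at ih ⊢
      linarith [ih (by linarith) (by linarith)]
  · induction z, hzk using Int.leInductionDown with
    | base => simp
    | pred z hzk ih =>
      have := hslope (i := z) (j := k + 1) (by linarith) (by linarith) hkb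
      simp only [add_sub_cancel_right] at this
      push_cast at ih ⊢
      linarith [ih (by linarith) (by linarith)]

end DiscreteConvexOn

theorem stmt_11 (m : ℕ) (x : Fin m → ℤ) (θ : ℤ → ℝ) (k A B : ℤ)
    (hconv : ∀ y : ℤ,
      (((Finset.univ.image x) ∪ {k, k + 1}).min' (by simp) ≤ y - 1) →
      (y + 1 ≤ ((Finset.univ.image x) ∪ {k, k + 1}).max' (by simp)) →
      θ y - θ (y - 1) ≤ θ (y + 1) - θ y)
    (hAB : A + B = m) (hsum : A * k + B * (k + 1) = ∑ j, x j) :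
    (A : ℝ) * θ k + (B : ℝ) * θ (k + 1) ≤ ∑ j, θ (x j) := by
  set S := (univ.image x) ∪ {k, k + 1}
  have hS : S.Nonempty := by simp [S]
  have hθ : DiscreteConvexOn θ (S.min' hS) (S.max' hS) := hconv
  have hsupport (z : ℤ) (hz : z ∈ S) :
      θ k + ((z - k : ℤ) : ℝ) * (θ (k + 1) - θ k) ≤ θ z :=
    hθ.add_mul_sub_le (S.min'_le k (by simp [S])) (S.le_max' (k + 1) (by simp [S]))
      (S.min'_le z hz) (S.le_max' z hz)
  have hB : ∑ j, (x j - k) = B := by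
    rw [sum_sub_distrib, ← hsum]
    simp only [sum_const, card_univ, Fintype.card_fin, nsmul_eq_mul]
    linear_combination k * hAB
  have hm : (m : ℝ) = A + B := by exact_mod_cast hAB.symm
  calc (A : ℝ) * θ k + B * θ (k + 1)
      = ∑ j, (θ k + ((x j - k : ℤ) : ℝ) * (θ (k + 1) - θ k)) := by
        rw [sum_add_distrib, ← sum_mul, ← Int.cast_sum, hB, sum_const, card_univ,
          Fintype.card_fin, nsmul_eq_mul, hm]
        ring
    _ ≤ ∑ j, θ (x j) := sum_le_sum fun j _ => hsupport (x j) (by simp [S])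
end

section
/- Let nonnegative integers x_0, ..., x_i with i ≥ 1 satisfy ∑ x_j = ki + t where 1 ≤ t ≤ k, and suppose the two smallest values among x_0,...,x_i are t + p_2 and t + p_1 with 0 ≤ p_2 ≤ p_1 and p_1 + p_2 ≤ k − t. Then ∑_j C(x_j, 2) ≥ f0 − (−k²/2 + k(p_1+p_2) + kt + k/2 − p_1²/2 − p_1 t + p_1/2 − p_2²/2 − p_2 t + p_2/2 − t²/2 − t/2 + 1), where f0 = C(t−1,2) + C(k+1,2) + (i−1)·C(k,2). -/
lemma tangent_choose2 (k m : ℕ) :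
    (k : ℝ) * ((m : ℝ) - k) + ((Nat.choose k 2 : ℕ) : ℝ) ≤ ((Nat.choose m 2 : ℕ) : ℝ) := by
  rw [Nat.cast_choose_two, Nat.cast_choose_two]
  rcases le_or_gt m k with h | h
  · have h' : (m : ℝ) ≤ k := Nat.cast_le.mpr h
    nlinarith
  · have h' : (k : ℝ) + 1 ≤ m := by exact_mod_cast h
    nlinarith

theorem stmt_12 (k t i p₁ p₂ : ℕ) (hi : 1 ≤ i) (ht : 1 ≤ t) (htk : t ≤ k)
    (hp : p₂ ≤ p₁) (hpk : p₁ + p₂ + t ≤ k)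
    (x : Fin (i + 1) → ℕ)
    (hsum : ∑ j, x j = k * i + t)
    (hmin : ∃ j₀ : Fin (i + 1), x j₀ = t + p₂ ∧ (∀ j, t + p₂ ≤ x j) ∧
      (∀ j, j ≠ j₀ → t + p₁ ≤ x j) ∧ ∃ j₁, j₁ ≠ j₀ ∧ x j₁ = t + p₁) :
    ((Nat.choose (t - 1) 2 + Nat.choose (k + 1) 2 + (i - 1) * Nat.choose k 2 : ℕ) : ℝ)
      - (-(k : ℝ) ^ 2 / 2 + k * (p₁ + p₂) + k * t + k / 2 - p₁ ^ 2 / 2 - p₁ * t + p₁ / 2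
        - p₂ ^ 2 / 2 - p₂ * t + p₂ / 2 - t ^ 2 / 2 - t / 2 + 1)
      ≤ ∑ j, ((Nat.choose (x j) 2 : ℕ) : ℝ) := by
  obtain ⟨j₀, hx0, hge0, hge1, j₁, hne, hx1⟩ := hmin
  set A := (Finset.univ.erase j₀).erase j₁ with hA
  have hj₁ : j₁ ∈ Finset.univ.erase j₀ := Finset.mem_erase.mpr ⟨hne, Finset.mem_univ _⟩
  have hsplit : ∀ f : Fin (i + 1) → ℝ, ∑ j, f j = f j₀ + f j₁ + ∑ j ∈ A, f j := by
    intro f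
    rw [← Finset.sum_erase_add _ _ (Finset.mem_univ j₀), ← Finset.sum_erase_add _ _ hj₁]
    ring
  have hcard : (A.card : ℝ) = (i : ℝ) - 1 := by
    rw [hA, Finset.card_erase_of_mem hj₁,
      Finset.card_erase_of_mem (Finset.mem_univ _), Finset.card_univ, Fintype.card_fin]
    have : i + 1 - 1 - 1 = i - 1 := by omega
    rw [this, Nat.cast_sub hi, Nat.cast_one]
  have hsumR : ∑ j, ((x j : ℕ) : ℝ) = (k : ℝ) * i + t := by
    rw [← Nat.cast_sum]
    exact_mod_cast congrArg (Nat.cast : ℕ → ℝ) hsum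
  have hSA : ∑ j ∈ A, ((x j : ℕ) : ℝ) = (k : ℝ) * i + t - (t + p₂) - (t + p₁) := by
    have := hsplit (fun j => ((x j : ℕ) : ℝ))
    rw [hsumR] at this
    simp only [hx0, hx1] at this
    push_cast at this
    linarith
  have hbound : (k : ℝ) * (∑ j ∈ A, ((x j : ℕ) : ℝ)) +
      (A.card : ℝ) * (((Nat.choose k 2 : ℕ) : ℝ) - (k : ℝ) * k)
      ≤ ∑ j ∈ A, ((Nat.choose (x j) 2 : ℕ) : ℝ) := by
    have h1 : ∑ j ∈ A, ((k : ℝ) * ((x j : ℝ) - k) + ((Nat.choose k 2 : ℕ) : ℝ))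
        ≤ ∑ j ∈ A, ((Nat.choose (x j) 2 : ℕ) : ℝ) :=
      Finset.sum_le_sum fun j _ => tangent_choose2 k (x j)
    calc (k : ℝ) * (∑ j ∈ A, ((x j : ℕ) : ℝ)) +
        (A.card : ℝ) * (((Nat.choose k 2 : ℕ) : ℝ) - (k : ℝ) * k)
        = ∑ j ∈ A, ((k : ℝ) * ((x j : ℝ) - k) + ((Nat.choose k 2 : ℕ) : ℝ)) := by
          rw [Finset.sum_add_distrib, Finset.sum_const, nsmul_eq_mul]
          simp only [mul_sub]
          rw [Finset.sum_sub_distrib, ← Finset.mul_sum, Finset.sum_const, nsmul_eq_mul]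
          ring
      _ ≤ _ := h1
  rw [hsplit (fun j => ((Nat.choose (x j) 2 : ℕ) : ℝ))]
  simp only [hx0, hx1]
  rw [hSA, hcard] at hbound
  have ht' : ((t - 1 : ℕ) : ℝ) = (t : ℝ) - 1 := by
    rw [Nat.cast_sub ht, Nat.cast_one]
  have hi' : ((i - 1 : ℕ) : ℝ) = (i : ℝ) - 1 := by
    rw [Nat.cast_sub hi, Nat.cast_one]
  have hc1 : ((Nat.choose (t + p₂) 2 : ℕ) : ℝ) = (t + p₂ : ℝ) * ((t + p₂ : ℝ) - 1) / 2 := by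
    rw [Nat.cast_choose_two]; push_cast; ring
  have hc2 : ((Nat.choose (t + p₁) 2 : ℕ) : ℝ) = (t + p₁ : ℝ) * ((t + p₁ : ℝ) - 1) / 2 := by
    rw [Nat.cast_choose_two]; push_cast; ring
  have hc3 : ((Nat.choose (t - 1) 2 : ℕ) : ℝ) = ((t : ℝ) - 1) * ((t : ℝ) - 2) / 2 := by
    rw [Nat.cast_choose_two, ht']; ring
  have hc4 : ((Nat.choose (k + 1) 2 : ℕ) : ℝ) = ((k : ℝ) + 1) * (k : ℝ) / 2 := by
    rw [Nat.cast_choose_two]; push_cast; ring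
  have hc5 : ((Nat.choose k 2 : ℕ) : ℝ) = (k : ℝ) * ((k : ℝ) - 1) / 2 := by rw [Nat.cast_choose_two]
  push_cast [hc1, hc2, hc3, hc4] at *
  rw [hc5] at hbound ⊢
  nlinarith [hbound]
end

section
/- Let nonnegative integers x_0, ..., x_i with i ≥ 1 satisfy ∑ x_j = ki + t where 1 ≤ t ≤ k, and suppose the two smallest values among x_0,...,x_i are t + p_2 and t + p_1 with 0 ≤ p_2 ≤ p_1 and p_1 + p_2 ≥ k − t. Then ∑_j C(x_j, 2) ≥ f0 − (−k²/2 + k(p_1+p_2) + kt + 3k/2 − p_1²/2 − p_1 t − p_1/2 − p_2²/2 − p_2 t − p_2/2 − t²/2 − 3t/2 + 1), where f0 = C(t−1,2) + C(k+1,2) + (i−1)·C(k,2). -/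
lemma choose_two_real (n : ℕ) : ((n.choose 2 : ℕ) : ℝ) = (n : ℝ) * ((n : ℝ) - 1) / 2 := by
  induction n with
  | zero => simp
  | succ m ih =>
    rw [Nat.choose_succ_succ, Nat.choose_one_right]
    push_cast [ih]
    ring

lemma tangent_int (a b : ℕ) :
    (b : ℝ) * ((b : ℝ) - 1) / 2 + ((a : ℝ) - b) * ((b : ℝ) - 1)
      ≤ (a : ℝ) * ((a : ℝ) - 1) / 2 := by
  rcases lt_or_ge a b with h | h
  · have h' : (a : ℝ) + 1 ≤ b := by exact_mod_cast h
    nlinarith [mul_nonneg (by linarith : (0:ℝ) ≤ (b:ℝ) - a) (by linarith : (0:ℝ) ≤ (b:ℝ) - a - 1)]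
  · have h' : (b : ℝ) ≤ a := by exact_mod_cast h
    nlinarith [mul_nonneg (by linarith : (0:ℝ) ≤ (a:ℝ) - b) (by linarith : (0:ℝ) ≤ (a:ℝ) - b + 1)]

theorem stmt_13 (k t i p₁ p₂ : ℕ) (hi : 1 ≤ i) (ht : 1 ≤ t) (htk : t ≤ k)
    (hp : p₂ ≤ p₁) (hpk : k ≤ p₁ + p₂ + t)
    (x : Fin (i + 1) → ℕ)
    (hsum : ∑ j, x j = k * i + t)
    (hmin : ∃ j₀ : Fin (i + 1), x j₀ = t + p₂ ∧ (∀ j, t + p₂ ≤ x j) ∧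
      (∀ j, j ≠ j₀ → t + p₁ ≤ x j) ∧ ∃ j₁, j₁ ≠ j₀ ∧ x j₁ = t + p₁) :
    ((Nat.choose (t - 1) 2 + Nat.choose (k + 1) 2 + (i - 1) * Nat.choose k 2 : ℕ) : ℝ)
      - (-(k : ℝ) ^ 2 / 2 + k * (p₁ + p₂) + k * t + 3 * k / 2 - p₁ ^ 2 / 2 - p₁ * t - p₁ / 2
        - p₂ ^ 2 / 2 - p₂ * t - p₂ / 2 - t ^ 2 / 2 - 3 * t / 2 + 1)
      ≤ ∑ j, ((Nat.choose (x j) 2 : ℕ) : ℝ) := by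
  obtain ⟨j₀, hx0, hlow, hlow1, j₁, hne, hx1⟩ := hmin
  set A : Finset (Fin (i + 1)) := (Finset.univ.erase j₀).erase j₁ with hA
  have hj₁mem : j₁ ∈ Finset.univ.erase j₀ := Finset.mem_erase.mpr ⟨hne, Finset.mem_univ j₁⟩
  have h0 : ∀ g : Fin (i + 1) → ℝ, ∑ j, g j = g j₀ + g j₁ + ∑ j ∈ A, g j := by
    intro g
    rw [← Finset.add_sum_erase _ g (Finset.mem_univ j₀), ← Finset.add_sum_erase _ g hj₁mem]
    ring
  have hx0' : (x j₀ : ℝ) = t + p₂ := by exact_mod_cast congrArg (Nat.cast (R := ℝ)) hx0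
  have hx1' : (x j₁ : ℝ) = t + p₁ := by exact_mod_cast congrArg (Nat.cast (R := ℝ)) hx1
  have hcard : (A.card : ℝ) = (i : ℝ) - 1 := by
    rw [hA, Finset.card_erase_of_mem hj₁mem, Finset.card_erase_of_mem (Finset.mem_univ j₀),
      Finset.card_univ, Fintype.card_fin]
    have : i + 1 - 1 - 1 = i - 1 := by omega
    rw [this, Nat.cast_sub hi, Nat.cast_one]
  have hSA : ∑ j ∈ A, (x j : ℝ) = (k : ℝ) * i + t - (t + p₂) - (t + p₁) := by
    have h2 : ∑ j, (x j : ℝ) = (k : ℝ) * i + t := by exact_mod_cast hsum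
    rw [h0 (fun j => (x j : ℝ)), hx0', hx1'] at h2
    linarith
  have hsum2 : ∑ j ∈ A, ((k : ℝ) * ((k : ℝ) - 1) / 2 + ((x j : ℝ) - k) * ((k : ℝ) - 1))
      = (A.card : ℝ) * ((k : ℝ) * ((k : ℝ) - 1) / 2)
        + ((∑ j ∈ A, (x j : ℝ)) - (A.card : ℝ) * k) * ((k : ℝ) - 1) := by
    rw [Finset.sum_add_distrib, Finset.sum_const, nsmul_eq_mul, ← Finset.sum_mul,
      Finset.sum_sub_distrib, Finset.sum_const, nsmul_eq_mul]
  have hbound : (A.card : ℝ) * ((k : ℝ) * ((k : ℝ) - 1) / 2)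
      + ((∑ j ∈ A, (x j : ℝ)) - (A.card : ℝ) * k) * ((k : ℝ) - 1)
      ≤ ∑ j ∈ A, ((Nat.choose (x j) 2 : ℕ) : ℝ) := by
    rw [← hsum2]
    apply Finset.sum_le_sum
    intro j _
    rw [choose_two_real]
    exact tangent_int (x j) k
  rw [hSA, hcard] at hbound
  simp only [choose_two_real] at hbound
  rw [h0 (fun j => ((Nat.choose (x j) 2 : ℕ) : ℝ))]
  push_cast
  simp only [choose_two_real]
  rw [hx0', hx1']
  push_cast [Nat.cast_sub ht, Nat.cast_sub hi]
  linarith [hbound]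
end

section
/- For all integers k ≥ 2, t, p_1, p_2 with p_1 ≥ p_2 ≥ 0, t ≥ 2, p_1 + p_2 ≥ k − t, t ≥ 2k/3, k ≥ t + p_1 + p_2, and k ≥ t + p_1, the polynomial g(k,t,p_1,p_2) = 2k³ − 4k²t − 4k²p_1 − 5k²p_2 − 9k² + 2kt² + 4ktp_1 + 6ktp_2 + 12kt + 2kp_1² + 2kp_1p_2 + 8kp_1 + 4kp_2² + 11kp_2 + 9k + t²p_2 − t² − 4tp_1 − 7tp_2 − 9t − p_1²p_2 − 3p_1² + 2p_1p_2² + p_1p_2 − 3p_1 − p_2³ − 4p_2² − 3p_2 is positive. -/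
set_option maxHeartbeats 1000000 in
theorem stmt_17 (k t p₁ p₂ : ℤ) (hk : 2 ≤ k) (hp₂ : 0 ≤ p₂) (hp : p₂ ≤ p₁)
    (ht : 2 ≤ t) (htk : 2 * k ≤ 3 * t)
    (h₁ : t + p₁ ≤ k) (h₂ : k ≤ t + p₁ + p₂) :
    0 < 2*k^3 - 4*k^2*t - 4*k^2*p₁ - 5*k^2*p₂ - 9*k^2 + 2*k*t^2 + 4*k*t*p₁
      + 6*k*t*p₂ + 12*k*t + 2*k*p₁^2 + 2*k*p₁*p₂ + 8*k*p₁ + 4*k*p₂^2 + 11*k*p₂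
      + 9*k + t^2*p₂ - t^2 - 4*t*p₁ - 7*t*p₂ - 9*t - p₁^2*p₂ - 3*p₁^2
      + 2*p₁*p₂^2 + p₁*p₂ - 3*p₁ - p₂^3 - 4*p₂^2 - 3*p₂ := by
  set a := k - t - p₁ with ha'
  set b := t + p₁ + p₂ - k with hb'
  set c := 3 * t - 2 * k with hc'
  set d := p₁ - p₂ with hd'
  have ha : 0 ≤ a := by omega
  have hb : 0 ≤ b := by omega
  have hc : 0 ≤ c := by omega
  have hd : 0 ≤ d := by omega
  have hpos : 0 < 6*d + 2*c^2 + 3*b + 12*a := by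
    rcases lt_or_ge 0 a with h | h
    · nlinarith [sq_nonneg c]
    · have : a = 0 := le_antisymm h ha
      rcases lt_or_ge 0 b with h2 | h2
      · nlinarith [sq_nonneg c]
      · have hb0 : b = 0 := le_antisymm h2 hb
        rcases lt_or_ge 0 d with h3 | h3
        · nlinarith [sq_nonneg c]
        · have hd0 : d = 0 := le_antisymm h3 hd
          have hcge : 2 ≤ c := by omega
          nlinarith
  have key : 2*k^3 - 4*k^2*t - 4*k^2*p₁ - 5*k^2*p₂ - 9*k^2 + 2*k*t^2 + 4*k*t*p₁
      + 6*k*t*p₂ + 12*k*t + 2*k*p₁^2 + 2*k*p₁*p₂ + 8*k*p₁ + 4*k*p₂^2 + 11*k*p₂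
      + 9*k + t^2*p₂ - t^2 - 4*t*p₁ - 7*t*p₂ - 9*t - p₁^2*p₂ - 3*p₁^2
      + 2*p₁*p₂^2 + p₁*p₂ - 3*p₁ - p₂^3 - 4*p₂^2 - 3*p₂
      = 6*d + 6*c*d + 2*c^2 + 3*b + 20*b*d + 10*b*c + 6*b*c*d + 2*b*c^2 + 16*b^2
        + 14*b^2*d + 10*b^2*c + 13*b^3 + 12*a + 10*a*d + 12*a*c + 6*a*c*d
        + 2*a*c^2 + 41*a*b + 24*a*b*d + 24*a*b*c + 47*a*b^2 + 12*a^2 + 16*a^2*d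
        + 16*a^2*c + 56*a^2*b + 28*a^3 := by
    rw [ha', hb', hc', hd']; ring
  rw [key]
  have h6 : 0 ≤ 6*c*d + 20*b*d + 10*b*c + 6*b*c*d + 2*b*c^2 + 16*b^2
        + 14*b^2*d + 10*b^2*c + 13*b^3 + 10*a*d + 12*a*c + 6*a*c*d
        + 2*a*c^2 + 41*a*b + 24*a*b*d + 24*a*b*c + 47*a*b^2 + 12*a^2 + 16*a^2*d
        + 16*a^2*c + 56*a^2*b + 28*a^3 := by positivity
  linarith
end
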